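/- arXiv:math/0610662 — 8 statements merged into one kernel-verified Lean document; each statement's English description precedes it below -/
import Mathlib

section
/- Let $\Delta$ be a pure simplicial complex on $[n]$ with $\mathrm{core}\,\Delta = \Delta$, such that $K[\Delta]$ is a gCI and $I_\Delta$ has a 2-linear resolution. Then for any two distinct facets $F$ and $H$ of $\Delta$ with $F \cap H \neq \emptyset$, there exists a unique pair $\{i_1, i_2\}$ with $i_1 \in F \setminus H$, $i_2 \in H \setminus F$, and $\{i_1, i_2\}$ an edge of the edge graph $G_\Delta$ (i.e., $X_{i_1}X_{i_2} \in I_\Delta$). -/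
open Finset

variable {n : ℕ}

/-- A (finite abstract) simplicial complex on vertex set `Fin n`:
down-closed and containing every vertex. -/
def IsComplex (Δ : Finset (Finset (Fin n))) : Prop :=
  (∀ s ∈ Δ, ∀ t ⊆ s, t ∈ Δ) ∧ ∀ i : Fin n, {i} ∈ Δ

/-- `F` is a facet (maximal face) of `Δ`. -/
def IsFacet (Δ : Finset (Finset (Fin n))) (F : Finset (Fin n)) : Prop :=
  F ∈ Δ ∧ ∀ G ∈ Δ, F ⊆ G → F = G

/-- `Δ` is pure: all facets have the same cardinality. -/
def IsPure (Δ : Finset (Finset (Fin n))) : Prop :=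
  ∀ F G, IsFacet Δ F → IsFacet Δ G → F.card = G.card

/-- `core Δ = Δ`: every vertex `i` has some `j` with `{i,j} ∉ Δ`. -/
def FullCore (Δ : Finset (Finset (Fin n))) : Prop :=
  ∀ i : Fin n, ∃ j, j ≠ i ∧ ({i, j} : Finset (Fin n)) ∉ Δ

/-- The edge graph `G_Δ`: edges are the 2-element non-faces of `Δ`
(the supports of the degree-2 generators of the Stanley–Reisner ideal). -/
def edgeGraph (Δ : Finset (Finset (Fin n))) : SimpleGraph (Fin n) where
  Adj i j := i ≠ j ∧ ({i, j} : Finset (Fin n)) ∉ Δ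
  symm := by
    constructor
    intro i j h
    exact ⟨h.1.symm, by rw [Finset.pair_comm]; exact h.2⟩
  loopless := by constructor; intro i h; exact h.1 rfl

/-- `Δ` is the clique complex of its 1-skeleton, i.e. `I_Δ` is generated in degree 2. -/
def CliqueComplexProp (Δ : Finset (Finset (Fin n))) : Prop :=
  ∀ F : Finset (Fin n), F ∈ Δ ↔ ∀ i ∈ F, ∀ j ∈ F, i ≠ j → ({i, j} : Finset (Fin n)) ∈ Δ

/-- A minimal non-face of `Δ` (support of a minimal generator of `I_Δ`). -/
def MinNonFace (Δ : Finset (Finset (Fin n))) (F : Finset (Fin n)) : Prop :=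
  F ∉ Δ ∧ ∀ t ⊂ F, t ∈ Δ

/-- Condition (iv) of the Goto–Takayama characterization: every length-4 path
(5 pairwise distinct vertices, consecutive ones adjacent) admits a chord from
the first vertex to the third, fourth or fifth vertex. -/
def FourPathChord {V : Type*} (G : SimpleGraph V) : Prop :=
  ∀ i₁ i₂ i₃ i₄ i₅ : V, ([i₁, i₂, i₃, i₄, i₅] : List V).Nodup →
    G.Adj i₁ i₂ → G.Adj i₂ i₃ → G.Adj i₃ i₄ → G.Adj i₄ i₅ →
    (G.Adj i₁ i₃ ∨ G.Adj i₁ i₄ ∨ G.Adj i₁ i₅)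

/-- A graph is chordal if every cycle of length `> 3` has a chord. -/
def IsChordal {V : Type*} (H : SimpleGraph V) : Prop :=
  ∀ (v : V) (w : H.Walk v v), w.IsCycle → 3 < w.length →
    ∃ a b, a ∈ w.support ∧ b ∈ w.support ∧ H.Adj a b ∧ s(a, b) ∉ w.edges

/-- The matroid basis exchange property for the edge set of a graph
(bases = edges, viewed as 2-element sets). -/
def ExchangeProp {V : Type*} [DecidableEq V] (G : SimpleGraph V) : Prop :=
  ∀ i j p q : V, G.Adj i j → G.Adj p q → i ∉ ({p, q} : Finset V) →
    ∃ k ∈ ({p, q} : Finset V), k ∉ ({i, j} : Finset V) ∧ G.Adj j k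

/-- `Δ` is a disjoint union of `d`-simplices and of "type 1" pairs of
`d`-simplices meeting in a common `(d-1)`-face. -/
def DisjointUnionStructure (Δ : Finset (Finset (Fin n))) (d : ℕ) : Prop :=
  (∀ s, s ∈ Δ ↔ ∃ F, IsFacet Δ F ∧ s ⊆ F) ∧
  (∀ F, IsFacet Δ F → F.card = d + 1) ∧
  (∀ F G, IsFacet Δ F → IsFacet Δ G → F ≠ G → (F ∩ G).Nonempty →
    (F \ G).card = 1 ∧ (G \ F).card = 1) ∧
  (∀ F G H, IsFacet Δ F → IsFacet Δ G → IsFacet Δ H → F ≠ G → (F ∩ G).Nonempty →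
    H ≠ F → H ≠ G → H ∩ (F ∪ G) = ∅)

section Homology

variable (K : Type*) [Field K]

/-- Auxiliary term of the simplicial boundary map. -/
noncomputable def bdryAux (Δ : Finset (Finset (Fin n))) (i : ℕ)
    (s : Finset (Fin n)) (a : Fin n) :
    ({t : Finset (Fin n) // t ∈ Δ ∧ t.card = i} →₀ K) :=
  if h : s.erase a ∈ Δ ∧ (s.erase a).card = i then
    ((-1 : K) ^ (s.filter (· < a)).card) • Finsupp.single ⟨s.erase a, h⟩ 1
  else 0

/-- The boundary map of the (augmented) simplicial chain complex of `Δ` over `K`,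
from chains on faces of cardinality `i+1` to chains on faces of cardinality `i`.
(Faces of cardinality `0`, i.e. the empty face, give the augmentation in degree `-1`,
so `ker (bdry K Δ m) / im (bdry K Δ (m+1))` is the reduced homology `H̃_m`.) -/
noncomputable def bdry (Δ : Finset (Finset (Fin n))) (i : ℕ) :
    ({t : Finset (Fin n) // t ∈ Δ ∧ t.card = i + 1} →₀ K) →ₗ[K]
      ({t : Finset (Fin n) // t ∈ Δ ∧ t.card = i} →₀ K) :=
  Finsupp.lsum K fun s => LinearMap.toSpanSingleton K _ (∑ a ∈ s.1, bdryAux K Δ i s.1 a)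

/-- The link of a face `F` in `Δ`. -/
def link (Δ : Finset (Finset (Fin n))) (F : Finset (Fin n)) : Finset (Finset (Fin n)) :=
  Δ.filter fun G => G ∩ F = ∅ ∧ G ∪ F ∈ Δ

end Homology

/-!
Write `G` for the edge graph. Faces of `Δ` are the independent sets of `G`, so facets are its
maximal independent sets, and every vertex outside a facet has a neighbour in it. Chordality of
`Gᶜ` says that `G` has no induced `2K₂`: two disjoint edges always have an edge between them.

Existence: a vertex of `F \ H` has a neighbour in `H`, necessarily outside `F`. Given that,
`2K₂`-freeness reduces uniqueness to the claim that no `u ∈ F \ H` has two neighbours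
`w ≠ w'` in `H \ F`. Suppose it had, and pick `c ∈ F ∩ H`. The path condition along a shortest
`c`–`u` path yields a common neighbour `x` of `c` and `u`, and then along the paths `c x u z t`
it shows that `u` is the only vertex of `F` adjacent to any neighbour `z ∈ H` of `u`. By purity
there is a second vertex `a ∈ F \ H`; with a neighbour `b ∈ H` of `a`, the edges `u w` and `a b`
form an induced `2K₂`.
-/

namespace SimpleGraph

variable {V : Type*} {G : SimpleGraph V}

theorem IsIndepSet.not_adj {s : Set V} (hs : G.IsIndepSet s) {i j : V} (hi : i ∈ s)
    (hj : j ∈ s) : ¬G.Adj i j :=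
  fun h => hs hi hj h.ne h

theorem exists_adj_of_maximal_isIndepSet {s : Set V} (hs : Maximal G.IsIndepSet s) {v : V}
    (hv : v ∉ s) : ∃ u ∈ s, G.Adj v u := by
  by_contra! h
  have hins : G.IsIndepSet (insert v s) :=
    hs.1.insert fun u hu _ => ⟨h u hu, fun h' => h u hu h'.symm⟩
  exact hv (hs.eq_of_le hins (Set.subset_insert v s) ▸ Set.mem_insert v s)

end SimpleGraph

open SimpleGraph

section Graph

variable {V : Type*} {G : SimpleGraph V}

theorem adj_or_adj_of_isChordal_compl (hG : IsChordal Gᶜ) {a b a' b' : V}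
    (hab : G.Adj a b) (hab' : G.Adj a' b') (haa' : a ≠ a') (hbb' : b ≠ b')
    (hab'' : a ≠ b') (ha'b : a' ≠ b) :
    G.Adj a a' ∨ G.Adj b b' ∨ G.Adj a b' ∨ G.Adj a' b := by
  by_contra! ⟨h₁, h₂, h₃, h₄⟩
  let w : Gᶜ.Walk a a :=
    .cons ⟨haa', h₁⟩ <| .cons ⟨ha'b, h₄⟩ <| .cons ⟨hbb', h₂⟩ <|
      .cons ⟨hab''.symm, fun h => h₃ h.symm⟩ .nil
  have hw : w.IsCycle := by
    simp only [w, Walk.isCycle_def, Walk.isTrail_def, Walk.edges_cons, Walk.edges_nil,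
      Walk.support_cons, Walk.support_nil, List.tail_cons, List.nodup_cons, List.mem_cons,
      List.not_mem_nil, Sym2.eq_iff, List.nodup_nil]
    grind [hab.ne, hab'.ne]
  obtain ⟨x, y, hx, hy, ⟨hxy, hxy'⟩, hxyw⟩ := hG a w hw (by simp [w])
  simp only [w, Walk.support_cons, Walk.support_nil, Walk.edges_cons, Walk.edges_nil,
    List.mem_cons, List.not_mem_nil, Sym2.eq_iff] at hx hy hxyw
  rcases hx with rfl | rfl | rfl | rfl | rfl | ⟨⟩ <;>
    rcases hy with rfl | rfl | rfl | rfl | rfl | ⟨⟩ <;> grind [hab.symm, hab'.symm]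

theorem FourPathChord.exists_common_neighbor (hG : FourPathChord G) {c u z z' : V}
    (hcu : G.Reachable c u) (hne : c ≠ u) (hnadj : ¬G.Adj c u) (hzz' : z ≠ z')
    (huz : G.Adj u z) (huz' : G.Adj u z') (hcz : ¬G.Adj c z) (hcz' : ¬G.Adj c z') :
    ∃ x, G.Adj c x ∧ G.Adj x u := by
  obtain ⟨p, hp⟩ := hcu.exists_walk_length_eq_dist
  have hpath := p.isPath_of_length_eq_dist hp
  have hshort {y : V} (h : G.Adj c y) (q : G.Walk y u) : p.length ≤ q.length + 1 :=
    hp ▸ dist_le (.cons h q)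
  rcases p with _ | ⟨h₁, _ | ⟨h₂, _ | ⟨h₃, _ | ⟨h₄, q⟩⟩⟩⟩
  · exact absurd rfl hne
  · exact absurd h₁ hnadj
  · exact ⟨_, h₁, h₂⟩
  · rename_i v₁ v₂
    -- the fifth vertex of a 4-path must avoid `v₂`: this is why `u` needs two neighbours
    obtain ⟨y, huy, hcy, hyv₂⟩ : ∃ y, G.Adj u y ∧ ¬G.Adj c y ∧ y ≠ v₂ := by
      by_cases h : z = v₂
      · exact ⟨z', huz', hcz', fun h' => hzz' (h.trans h'.symm)⟩
      · exact ⟨z, huz, hcz, h⟩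
    have hnodup : [c, v₁, v₂, u, y].Nodup := by
      have := hpath.support_nodup
      simp only [Walk.support_cons, Walk.support_nil, List.nodup_cons, List.mem_cons,
        List.not_mem_nil] at this ⊢
      grind [huy.ne, h₁.ne, huy.symm]
    rcases hG c v₁ v₂ u y hnodup h₁ h₂ h₃ huy with h | h | h
    · exact absurd (hshort h (.cons h₃ .nil))
        (by simp only [Walk.length_cons, Walk.length_nil]; omega)
    · exact absurd h hnadj
    · exact absurd h hcy
  · rename_i v₁ v₂ v₃ v₄
    have hnodup : [c, v₁, v₂, v₃, v₄].Nodup := by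
      have := hpath.support_nodup
      rw [Walk.support_cons, Walk.support_cons, Walk.support_cons, Walk.support_cons,
        ← q.cons_tail_support] at this
      exact this.sublist (by simp)
    rcases hG c v₁ v₂ v₃ v₄ hnodup h₁ h₂ h₃ h₄ with h | h | h
    · exact absurd (hshort h (.cons h₃ (.cons h₄ q))) (by simp only [Walk.length_cons]; omega)
    · exact absurd (hshort h (.cons h₄ q)) (by simp only [Walk.length_cons]; omega)
    · exact absurd (hshort h q) (by simp only [Walk.length_cons]; omega)

theorem FourPathChord.eq_of_adj_of_adj_of_mem (hG : FourPathChord G) {F H : Finset V}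
    (hF : G.IsIndepSet F) (hH : G.IsIndepSet H) {c x u z t : V} (hcF : c ∈ F) (hcH : c ∈ H)
    (hcx : G.Adj c x) (hxu : G.Adj x u) (hu : u ∈ F) (hz : z ∈ H) (huz : G.Adj u z)
    (ht : t ∈ F) (htz : G.Adj t z) : t = u := by
  by_contra htu
  have hcu := hF.not_adj hcF hu
  have hcz := hH.not_adj hcH hz
  have hct := hF.not_adj hcF ht
  have hnodup : [c, x, u, z, t].Nodup := by
    simp only [List.nodup_cons, List.mem_cons, List.not_mem_nil, List.nodup_nil]
    grind [G.irrefl, G.adj_comm]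
  exact (hG c x u z t hnodup hcx hxu huz htz.symm).elim hcu (·.elim hcz hct)

variable [DecidableEq V]

theorem eq_of_adj_of_adj_of_mem_sdiff (hG : FourPathChord G) (hGc : IsChordal Gᶜ)
    (hconn : G.Preconnected) {F H : Finset V} (hF : G.IsIndepSet F)
    (hH : Maximal G.IsIndepSet H) (hcard : F.card = H.card) (hFH : (F ∩ H).Nonempty)
    {u w w' : V} (hu : u ∈ F \ H) (hw : w ∈ H \ F) (hw' : w' ∈ H \ F)
    (huw : G.Adj u w) (huw' : G.Adj u w') : w = w' := by
  by_contra hww'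
  obtain ⟨c, hc⟩ := hFH
  obtain ⟨hcF, hcH⟩ := mem_inter.1 hc
  obtain ⟨huF, huH⟩ := mem_sdiff.1 hu
  obtain ⟨hwH, hwF⟩ := mem_sdiff.1 hw
  obtain ⟨x, hcx, hxu⟩ := hG.exists_common_neighbor (hconn c u) (fun h => huH (h ▸ hcH))
    (hF.not_adj hcF huF) hww' huw huw' (hH.1.not_adj hcH hwH)
    (hH.1.not_adj hcH (mem_sdiff.1 hw').1)
  have honly {z t : V} (hz : z ∈ H) (huz : G.Adj u z) (ht : t ∈ F) (htz : G.Adj t z) : t = u :=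
    hG.eq_of_adj_of_adj_of_mem hF hH.1 hcF hcH hcx hxu huF hz huz ht htz
  obtain ⟨a, ha, hau⟩ : ∃ a ∈ F \ H, a ≠ u := by
    refine exists_mem_ne ?_ u
    rw [card_sdiff_comm hcard, one_lt_card]
    exact ⟨w, hw, w', hw', hww'⟩
  obtain ⟨haF, haH⟩ := mem_sdiff.1 ha
  obtain ⟨b, hbH, hab⟩ := exists_adj_of_maximal_isIndepSet hH haH
  have hwb : w ≠ b := fun h => hau (honly hwH huw haF (h ▸ hab))
  have hub : u ≠ b := fun h => hF.not_adj haF huF (h ▸ hab)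
  rcases adj_or_adj_of_isChordal_compl hGc huw hab hau.symm hwb hub (fun h => hwF (h ▸ haF))
    with h | h | h | h
  · exact hF.not_adj huF haF h
  · exact hH.1.not_adj hwH hbH h
  · exact hau (honly hbH h haF hab)
  · exact hau (honly hwH huw haF h)

theorem existsUnique_adj_of_maximal_isIndepSet (hG : FourPathChord G) (hGc : IsChordal Gᶜ)
    (hconn : G.Preconnected) {F H : Finset V} (hF : Maximal G.IsIndepSet F)
    (hH : Maximal G.IsIndepSet H) (hcard : F.card = H.card) (hne : F ≠ H)
    (hFH : (F ∩ H).Nonempty) :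
    ∃! p : V × V, p.1 ∈ F \ H ∧ p.2 ∈ H \ F ∧ G.Adj p.1 p.2 := by
  have unique_right {u w w' : V} := eq_of_adj_of_adj_of_mem_sdiff (u := u) (w := w) (w' := w')
    hG hGc hconn hF.1 hH hcard hFH
  have unique_left {u w w' : V} := eq_of_adj_of_adj_of_mem_sdiff (u := u) (w := w) (w' := w')
    hG hGc hconn hH.1 hF hcard.symm (inter_comm F H ▸ hFH)
  obtain ⟨a, ha⟩ : (F \ H).Nonempty :=
    sdiff_nonempty.2 fun h => hne (eq_of_subset_of_card_le h hcard.ge)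
  obtain ⟨haF, haH⟩ := mem_sdiff.1 ha
  obtain ⟨b, hbH, hab⟩ := exists_adj_of_maximal_isIndepSet hH haH
  have hbF : b ∉ F := fun h => hF.1.not_adj haF h hab
  have hb : b ∈ H \ F := mem_sdiff.2 ⟨hbH, hbF⟩
  refine ⟨(a, b), ⟨ha, hb, hab⟩, ?_⟩
  rintro ⟨a', b'⟩ ⟨ha', hb', hab'⟩
  by_cases haa : a' = a
  · subst haa
    exact Prod.ext rfl (unique_right ha' hb' hb hab' hab)
  have hbb : b' ≠ b := fun h => haa (unique_left hb ha' ha (h ▸ hab'.symm) hab.symm)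
  obtain ⟨ha'F, -⟩ := mem_sdiff.1 ha'
  obtain ⟨hb'H, hb'F⟩ := mem_sdiff.1 hb'
  exfalso
  rcases adj_or_adj_of_isChordal_compl hGc hab hab' (Ne.symm haa) (Ne.symm hbb)
    (fun h => hb'F (h ▸ haF)) (fun h => hbF (h ▸ ha'F)) with h | h | h | h
  · exact hF.1.not_adj haF ha'F h
  · exact hH.1.not_adj hbH hb'H h
  · exact hbb (unique_right ha hb hb' hab h).symm
  · exact hbb (unique_right ha' hb' hb hab' h)

end Graph

section StanleyReisner

variable {Δ : Finset (Finset (Fin n))}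

theorem isIndepSet_edgeGraph_of_mem (hclique : CliqueComplexProp Δ) {s : Finset (Fin n)}
    (hs : s ∈ Δ) : (edgeGraph Δ).IsIndepSet s :=
  fun i hi j hj hij h => h.2 ((hclique s).1 hs i hi j hj hij)

theorem IsFacet.maximal_isIndepSet (hclique : CliqueComplexProp Δ) {F : Finset (Fin n)}
    (hF : IsFacet Δ F) : Maximal (edgeGraph Δ).IsIndepSet F := by
  classical
  refine ⟨isIndepSet_edgeGraph_of_mem hclique hF.1, fun t ht hFt => ?_⟩
  have htΔ : t.toFinset ∈ Δ := (hclique _).2 fun i hi j hj hij => by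
    by_contra h
    exact ht (Set.mem_toFinset.1 hi) (Set.mem_toFinset.1 hj) hij ⟨hij, h⟩
  have hFt' := hF.2 _ htΔ fun x hx => Set.mem_toFinset.2 (hFt hx)
  intro x hx
  rw [Finset.mem_coe, hFt']
  exact Set.mem_toFinset.2 hx

end StanleyReisner

theorem stmt1_general (Δ : Finset (Finset (Fin n))) (hpure : IsPure Δ) (hclique : CliqueComplexProp Δ)
    (hconn : (edgeGraph Δ).Connected) (hpath : FourPathChord (edgeGraph Δ))
    (hchordal : IsChordal (edgeGraph Δ)ᶜ) :
    ∀ F H : Finset (Fin n), IsFacet Δ F → IsFacet Δ H → F ≠ H → (F ∩ H).Nonempty →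
      ∃! p : Fin n × Fin n, p.1 ∈ F \ H ∧ p.2 ∈ H \ F ∧ (edgeGraph Δ).Adj p.1 p.2 :=
  fun F H hF hH => existsUnique_adj_of_maximal_isIndepSet hpath hchordal hconn.preconnected
    (hF.maximal_isIndepSet hclique) (hH.maximal_isIndepSet hclique) (hpure F H hF hH)

/-- unique cross edge between two intersecting facets. -/
theorem stmt1 (Δ : Finset (Finset (Fin n))) (hΔ : IsComplex Δ)
    (hpure : IsPure Δ) (hcore : FullCore Δ) (hclique : CliqueComplexProp Δ)
    (hconn : (edgeGraph Δ).Connected) (hpath : FourPathChord (edgeGraph Δ))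
    (hchordal : IsChordal (edgeGraph Δ)ᶜ) :
    ∀ F H : Finset (Fin n), IsFacet Δ F → IsFacet Δ H → F ≠ H → (F ∩ H).Nonempty →
      ∃! p : Fin n × Fin n, p.1 ∈ F \ H ∧ p.2 ∈ H \ F ∧ (edgeGraph Δ).Adj p.1 p.2 :=
  stmt1_general Δ hpure hclique hconn hpath hchordal
end

section
/- Let $\Delta$ be a pure simplicial complex on $[n]$ with $\mathrm{core}\,\Delta = \Delta$, such that $K[\Delta]$ is a gCI and $I_\Delta$ has a 2-linear resolution. Then for any two distinct facets $F$ and $H$ with $F \cap H \neq \emptyset$, one has $|F \setminus H| = |H \setminus F| = 1$. -/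
open Finset

variable {n : ℕ}

/-!
Suppose `v ∈ F ∩ H` but `|F \ H| = |H \ F| ≥ 2`, and let `S = (F \ H) ∪ (H \ F)`. Maximality of `H`
gives every `a ∈ F \ H` a `G_Δ`-neighbour in `H \ F`, and chordality of the complement forbids an
induced matching between `F \ H` and `H \ F`; hence every vertex of `S` starts a path `t b a` of
`G_Δ` inside `S`. The 4-path chord condition bounds distances in `G_Δ` by `3`, so a shortest path
from `v` to `S` has length `2` or `3` and can be continued inside `S` to a path on five vertices;
its chord from `v` lands in `S ⊆ F ∪ H`. But `v` has no `G_Δ`-neighbour in the faces `F` and `H`.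
-/

namespace SimpleGraph

variable {V : Type*} {G : SimpleGraph V}

lemma exists_adj_dist_eq_of_dist_eq_add_one {u w : V} {k : ℕ} (h : G.dist u w = k + 1) :
    ∃ y, G.Adj y w ∧ G.dist u y = k := by
  obtain ⟨p, hp⟩ := exists_walk_of_dist_ne_zero (show G.dist u w ≠ 0 by omega)
  have hnil : ¬p.Nil := by rw [← Walk.length_eq_zero_iff]; omega
  have hle : G.dist u p.penultimate ≤ k := by
    have := dist_le p.dropLast
    rw [Walk.length_dropLast] at this
    omega
  refine ⟨p.penultimate, Walk.adj_penultimate hnil, ?_⟩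
  rcases (Walk.adj_penultimate hnil).diff_dist_adj (u := u) with h' | h' | h' <;> omega

lemma exists_dist_eq_of_le {u w : V} {k : ℕ} (h : k ≤ G.dist u w) : ∃ x, G.dist u x = k := by
  obtain ⟨m, hm⟩ := Nat.exists_eq_add_of_le h
  clear h
  induction m generalizing w with
  | zero => exact ⟨w, hm⟩
  | succ m ih =>
    obtain ⟨y, -, hy⟩ := exists_adj_dist_eq_of_dist_eq_add_one hm
    exact ih hy

lemma _root_.FourPathChord.dist_le_three (hG : FourPathChord G) (u w : V) : G.dist u w ≤ 3 := by
  by_contra! h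
  obtain ⟨x₄, h₄⟩ := exists_dist_eq_of_le (show 4 ≤ G.dist u w by omega)
  obtain ⟨x₃, a₄, h₃⟩ := exists_adj_dist_eq_of_dist_eq_add_one h₄
  obtain ⟨x₂, a₃, h₂⟩ := exists_adj_dist_eq_of_dist_eq_add_one h₃
  obtain ⟨x₁, a₂, h₁⟩ := exists_adj_dist_eq_of_dist_eq_add_one h₂
  have a₁ : G.Adj u x₁ := dist_eq_one_iff_adj.1 h₁
  have h₀ : G.dist u u = 0 := dist_self
  have hnodup : [u, x₁, x₂, x₃, x₄].Nodup := by
    simp only [List.nodup_cons, List.mem_cons, List.not_mem_nil]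
    grind
  rcases hG u x₁ x₂ x₃ x₄ hnodup a₁ a₂ a₃ a₄ with hc | hc | hc <;>
    grind [dist_eq_one_iff_adj]

lemma _root_.FourPathChord.exists_adj_of_notMem (hG : FourPathChord G) (hconn : G.Connected)
    {S : Finset V} (hS : S.Nonempty)
    (hpathS : ∀ t ∈ S, ∃ b ∈ S, ∃ a ∈ S, a ≠ t ∧ G.Adj t b ∧ G.Adj b a)
    {v : V} (hv : v ∉ S) : ∃ s ∈ S, G.Adj v s := by
  by_contra! hfar
  obtain ⟨t, ht, hmin⟩ := S.exists_min_image (G.dist v) hS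
  have htwo : ∀ s ∈ S, 1 < G.dist v s := fun s hs =>
    (hconn v s).one_lt_dist_of_ne_of_not_adj (fun h => hv (h ▸ hs)) (hfar s hs)
  obtain ⟨b, hb, a, ha, hat, htb, hba⟩ := hpathS t ht
  have h₀ : G.dist v v = 0 := dist_self
  have hb₂ := hmin b hb
  have ha₂ := hmin a ha
  have hdist := FourPathChord.dist_le_three hG v t
  obtain hd | hd : G.dist v t = 2 ∨ G.dist v t = 3 := by have := htwo t ht; omega
  · obtain ⟨x, hxt, hx⟩ := exists_adj_dist_eq_of_dist_eq_add_one hd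
    have hvx : G.Adj v x := dist_eq_one_iff_adj.1 hx
    -- on `S` the distance from `v` is at least `dist v t`, which separates the path vertices
    have hnodup : [v, x, t, b, a].Nodup := by
      simp only [List.nodup_cons, List.mem_cons, List.not_mem_nil]
      grind [Adj.ne]
    rcases hG v x t b a hnodup hvx hxt htb hba with hc | hc | hc
    · exact hfar t ht hc
    · exact hfar b hb hc
    · exact hfar a ha hc
  · obtain ⟨y, hyt, hy⟩ := exists_adj_dist_eq_of_dist_eq_add_one hd
    obtain ⟨x, hxy, hx⟩ := exists_adj_dist_eq_of_dist_eq_add_one hy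
    have hvx : G.Adj v x := dist_eq_one_iff_adj.1 hx
    have hnodup : [v, x, y, t, b].Nodup := by
      simp only [List.nodup_cons, List.mem_cons, List.not_mem_nil]
      grind [Adj.ne]
    rcases hG v x y t b hnodup hvx hxy hyt htb with hc | hc | hc
    · grind [dist_eq_one_iff_adj]
    · exact hfar t ht hc
    · exact hfar b hb hc

lemma _root_.IsChordal.adj_or_adj_of_cycle_four (hG : IsChordal G) {a b c d : V}
    (hab : G.Adj a b) (hbc : G.Adj b c) (hcd : G.Adj c d) (hda : G.Adj d a)
    (hac : a ≠ c) (hbd : b ≠ d) : G.Adj a c ∨ G.Adj b d := by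
  let W : G.Walk a a := .cons hab (.cons hbc (.cons hcd (.cons hda .nil)))
  have hcycle : W.IsCycle := by
    simp [W, Walk.cons_isCycle_iff, Walk.cons_isPath_iff, hab.ne, hbc.ne, hcd.ne, hda.ne,
      hab.ne.symm, hda.ne.symm, hac, hbd, hac.symm]
  obtain ⟨x, y, hx, hy, hxy, hchord⟩ := hG a W hcycle (by simp [W])
  simp only [W, Walk.support_cons, Walk.support_nil, Walk.edges_cons, Walk.edges_nil,
    List.mem_cons, List.not_mem_nil, or_false] at hx hy hchord
  rcases hx with rfl | rfl | rfl | rfl | rfl <;> rcases hy with rfl | rfl | rfl | rfl | rfl <;>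
    first
      | exact .inl hxy | exact .inl hxy.symm | exact .inr hxy | exact .inr hxy.symm
      | simp_all [Sym2.eq_swap]

end SimpleGraph

section Facets

variable {Δ : Finset (Finset (Fin n))}

lemma not_adj_edgeGraph_of_mem_face (hclique : CliqueComplexProp Δ) {s : Finset (Fin n)}
    (hs : s ∈ Δ) {i j : Fin n} (hi : i ∈ s) (hj : j ∈ s) : ¬ (edgeGraph Δ).Adj i j :=
  fun h => h.2 ((hclique s).1 hs i hi j hj h.1)

lemma exists_adj_edgeGraph_of_notMem_facet (hclique : CliqueComplexProp Δ)
    {H : Finset (Fin n)} (hH : IsFacet Δ H) {x : Fin n} (hx : x ∉ H) :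
    ∃ y ∈ H, (edgeGraph Δ).Adj x y := by
  by_contra! hcon
  have hins : insert x H ∈ Δ := by
    rw [hclique]
    intro i hi j hj hij
    by_contra hnot
    have hadj : (edgeGraph Δ).Adj i j := ⟨hij, hnot⟩
    rcases mem_insert.1 hi with rfl | hiH <;> rcases mem_insert.1 hj with rfl | hjH
    · exact hij rfl
    · exact hcon j hjH hadj
    · exact hcon i hiH hadj.symm
    · exact not_adj_edgeGraph_of_mem_face hclique hH.1 hiH hjH hadj
  exact hx (hH.2 _ hins (subset_insert x H) ▸ mem_insert_self x H)

lemma exists_adj_edgeGraph_mem_sdiff (hclique : CliqueComplexProp Δ) {F H : Finset (Fin n)}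
    (hF : F ∈ Δ) (hH : IsFacet Δ H) {a : Fin n} (ha : a ∈ F \ H) :
    ∃ b ∈ H \ F, (edgeGraph Δ).Adj a b := by
  obtain ⟨haF, haH⟩ := mem_sdiff.1 ha
  obtain ⟨b, hbH, hab⟩ := exists_adj_edgeGraph_of_notMem_facet hclique hH haH
  exact ⟨b, mem_sdiff.2 ⟨hbH, fun hbF => not_adj_edgeGraph_of_mem_face hclique hF haF hbF hab⟩,
    hab⟩

/- An induced matching `ab, a'b'` of `G_Δ` would make `a a' b b'` a chordless 4-cycle of the
complement. -/
lemma adj_edgeGraph_or_adj_of_mem_sdiff (hclique : CliqueComplexProp Δ)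
    (hchordal : IsChordal (edgeGraph Δ)ᶜ) {F H : Finset (Fin n)} (hF : F ∈ Δ) (hH : H ∈ Δ)
    {a a' b b' : Fin n} (ha : a ∈ F \ H) (ha' : a' ∈ F \ H) (hb : b ∈ H \ F) (hb' : b' ∈ H \ F)
    (haa' : a ≠ a') (hbb' : b ≠ b') (hab : (edgeGraph Δ).Adj a b)
    (ha'b' : (edgeGraph Δ).Adj a' b') :
    (edgeGraph Δ).Adj a b' ∨ (edgeGraph Δ).Adj a' b := by
  by_contra! hcon
  obtain ⟨hab', ha'b⟩ := hcon
  rw [mem_sdiff] at ha ha' hb hb'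
  rcases IsChordal.adj_or_adj_of_cycle_four hchordal
      ⟨haa', not_adj_edgeGraph_of_mem_face hclique hF ha.1 ha'.1⟩
      ⟨by rintro rfl; exact hb.2 ha'.1, ha'b⟩
      ⟨hbb', not_adj_edgeGraph_of_mem_face hclique hH hb.1 hb'.1⟩
      ⟨by rintro rfl; exact hb'.2 ha.1, fun h => hab' h.symm⟩ hab.ne ha'b'.ne with h | h
  · exact h.2 hab
  · exact h.2 ha'b'

lemma exists_adj_adj_edgeGraph_mem_sdiff (hclique : CliqueComplexProp Δ)
    (hchordal : IsChordal (edgeGraph Δ)ᶜ) {F H : Finset (Fin n)} (hF : F ∈ Δ)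
    (hH : IsFacet Δ H) (h2 : 2 ≤ (F \ H).card) {a : Fin n} (ha : a ∈ F \ H) :
    ∃ b ∈ H \ F, ∃ a' ∈ F \ H, a' ≠ a ∧ (edgeGraph Δ).Adj a b ∧ (edgeGraph Δ).Adj b a' := by
  obtain ⟨b, hb, hab⟩ := exists_adj_edgeGraph_mem_sdiff hclique hF hH ha
  by_cases hex : ∃ a' ∈ F \ H, a' ≠ a ∧ (edgeGraph Δ).Adj b a'
  · obtain ⟨a', ha', hne, hba'⟩ := hex
    exact ⟨b, hb, a', ha', hne, hab, hba'⟩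
  push Not at hex
  obtain ⟨a', ha', ha'a⟩ := exists_mem_ne (show 1 < (F \ H).card by omega) a
  obtain ⟨b', hb', ha'b'⟩ := exists_adj_edgeGraph_mem_sdiff hclique hF hH ha'
  have hbb' : b ≠ b' := by
    rintro rfl
    exact hex a' ha' ha'a ha'b'.symm
  rcases adj_edgeGraph_or_adj_of_mem_sdiff hclique hchordal hF hH.1 ha ha' hb hb' ha'a.symm hbb'
      hab ha'b' with h | h
  · exact ⟨b', hb', a', ha', ha'a, h, ha'b'.symm⟩
  · exact absurd h.symm (hex a' ha' ha'a)

lemma exists_adj_adj_edgeGraph_mem_sdiff_union (hclique : CliqueComplexProp Δ)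
    (hchordal : IsChordal (edgeGraph Δ)ᶜ) {F H : Finset (Fin n)} (hF : IsFacet Δ F)
    (hH : IsFacet Δ H) (hFH : 2 ≤ (F \ H).card) (hHF : 2 ≤ (H \ F).card) :
    ∀ t ∈ F \ H ∪ H \ F, ∃ b ∈ F \ H ∪ H \ F, ∃ a ∈ F \ H ∪ H \ F,
      a ≠ t ∧ (edgeGraph Δ).Adj t b ∧ (edgeGraph Δ).Adj b a := by
  intro t ht
  rcases mem_union.1 ht with ht | ht
  · obtain ⟨b, hb, a, ha, h⟩ := exists_adj_adj_edgeGraph_mem_sdiff hclique hchordal hF.1 hH hFH ht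
    exact ⟨b, mem_union_right _ hb, a, mem_union_left _ ha, h⟩
  · obtain ⟨b, hb, a, ha, h⟩ := exists_adj_adj_edgeGraph_mem_sdiff hclique hchordal hH.1 hF hHF ht
    exact ⟨b, mem_union_left _ hb, a, mem_union_right _ ha, h⟩

end Facets

theorem stmt2_general (Δ : Finset (Finset (Fin n)))
    (hpure : IsPure Δ) (hclique : CliqueComplexProp Δ)
    (hconn : (edgeGraph Δ).Connected) (hpath : FourPathChord (edgeGraph Δ))
    (hchordal : IsChordal (edgeGraph Δ)ᶜ) :
    ∀ F H : Finset (Fin n), IsFacet Δ F → IsFacet Δ H → F ≠ H → (F ∩ H).Nonempty →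
      (F \ H).card = 1 ∧ (H \ F).card = 1 := by
  intro F H hF hH hFH ⟨v, hv⟩
  have hcard : (F \ H).card = (H \ F).card := card_sdiff_comm (hpure F H hF hH)
  have hpos : (F \ H).Nonempty := sdiff_nonempty.2 fun hsub => hFH (hF.2 H hH.1 hsub)
  by_contra hne
  have h2 : 2 ≤ (F \ H).card := by have := hpos.card_pos; omega
  rw [mem_inter] at hv
  obtain ⟨s, hs, hvs⟩ := FourPathChord.exists_adj_of_notMem hpath hconn
    (hpos.mono subset_union_left)
    (exists_adj_adj_edgeGraph_mem_sdiff_union hclique hchordal hF hH h2 (hcard ▸ h2))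
    (v := v) (by simp [hv])
  rcases mem_union.1 hs with hs | hs
  · exact not_adj_edgeGraph_of_mem_face hclique hF.1 hv.1 (mem_sdiff.1 hs).1 hvs
  · exact not_adj_edgeGraph_of_mem_face hclique hH.1 hv.2 (mem_sdiff.1 hs).1 hvs

/-- intersecting facets differ in exactly one vertex on each side. -/
theorem stmt2 (Δ : Finset (Finset (Fin n))) (hΔ : IsComplex Δ)
    (hpure : IsPure Δ) (hcore : FullCore Δ) (hclique : CliqueComplexProp Δ)
    (hconn : (edgeGraph Δ).Connected) (hpath : FourPathChord (edgeGraph Δ))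
    (hchordal : IsChordal (edgeGraph Δ)ᶜ) :
    ∀ F H : Finset (Fin n), IsFacet Δ F → IsFacet Δ H → F ≠ H → (F ∩ H).Nonempty →
      (F \ H).card = 1 ∧ (H \ F).card = 1 :=
  stmt2_general Δ hpure hclique hconn hpath hchordal
end

section
/- Let $\Delta$ be a pure simplicial complex of dimension $\geq 2$ on $[n]$ with $\mathrm{core}\,\Delta = \Delta$, such that $K[\Delta]$ is a gCI and $I_\Delta$ has a 2-linear resolution. Then no three distinct facets pairwise intersect a common facet: if $F, G$ are distinct facets with $F \cap G \neq \emptyset$, then there is no third facet $H$ with $H \cap (F \cup G) \neq \emptyset$. Consequently $\Delta$ is a disjoint union of single facets and pairs of facets $(F,G)$ with $|F \setminus G| = |G \setminus F| = 1$. -/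
open Finset

variable {n : ℕ}

/-!
Two consequences of the hypotheses on the graph `G_Δ` drive the argument. Chordality of the
complement forbids two edges `x - y`, `x' - y'` with no edge between `{x, y}` and `{x', y'}`.
By the chord condition on 4-paths and connectivity, a nonempty vertex set `T` in which every
vertex starts a path `t - t₂ - t₃` inside `T` with `t ≠ t₃` is dominating: a vertex outside `T`
with no neighbour in `T` would propagate along a path to `T`, until the 4-path
`v - u - t - t₂ - t₃` has no admissible chord. Since `Δ` is the clique complex of its
1-skeleton, no two vertices of a face are adjacent, and a vertex outside a facet has a neighbour
in it.

For intersecting facets `F ≠ H` with `|F \ H| = |H \ F| ≥ 2`, the first fact makes the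
symmetric difference such a set `T`, but a vertex of `F ∩ H` has no neighbour in it. If a third
facet `H` met `F`, where `F \ G = {x}` and `G \ F = {y}`, then `|F| ≥ 3` forces `F \ H = {x}`,
and with `H \ F = {b}` the triangle `x, y, b` is dominating, yet a vertex of `F ∩ G` lies in
`H` and has no neighbour among `x, y, b`.
-/

theorem adj_or_adj_of_isChordal_compl_s4 {V : Type*} {G : SimpleGraph V} (hG : IsChordal Gᶜ)
    {x y x' y' : V} (hxy : G.Adj x y) (hxy' : G.Adj x' y') :
    G.Adj x x' ∨ G.Adj y y' ∨ G.Adj x y' ∨ G.Adj x' y := by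
  by_contra! h
  obtain ⟨h₁, h₂, h₃, h₄⟩ := h
  have hxx' : x ≠ x' := by rintro rfl; exact h₃ hxy'
  have hyy' : y ≠ y' := by rintro rfl; exact h₃ hxy
  have hxy'ne : x ≠ y' := by rintro rfl; exact h₁ hxy'.symm
  have hx'y : x' ≠ y := by rintro rfl; exact h₁ hxy
  have e₁ : Gᶜ.Adj x x' := ⟨hxx', h₁⟩
  have e₂ : Gᶜ.Adj x' y := ⟨hx'y, h₄⟩
  have e₃ : Gᶜ.Adj y y' := ⟨hyy', h₂⟩
  have e₄ : Gᶜ.Adj y' x := ⟨hxy'ne.symm, fun h => h₃ h.symm⟩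
  let w : Gᶜ.Walk x x := .cons e₁ (.cons e₂ (.cons e₃ (.cons e₄ .nil)))
  have hw : w.IsCycle := by
    simp [w, SimpleGraph.Walk.cons_isCycle_iff, hxx', hyy', hxy'ne, hx'y, hxy.ne, hxy'.ne,
      hxx'.symm, hxy'ne.symm, hxy.ne.symm]
  obtain ⟨a, b, ha, hb, hab, hne⟩ := hG x w hw (by simp [w])
  simp only [w, SimpleGraph.Walk.support_cons, SimpleGraph.Walk.support_nil, List.mem_cons,
    List.not_mem_nil, or_false] at ha hb
  simp only [w, SimpleGraph.Walk.edges_cons, SimpleGraph.Walk.edges_nil, List.mem_cons,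
    List.not_mem_nil, or_false] at hne
  rcases ha with rfl | rfl | rfl | rfl | rfl <;> rcases hb with rfl | rfl | rfl | rfl | rfl <;>
    simp_all [SimpleGraph.compl_adj, SimpleGraph.adj_comm]

theorem FourPathChord.mem_or_exists_adj {V : Type*} {G : SimpleGraph V} (hpath : FourPathChord G)
    (hconn : G.Connected) {T : Set V}
    (hT : ∀ t ∈ T, ∃ t₂ ∈ T, ∃ t₃ ∈ T, t ≠ t₃ ∧ G.Adj t t₂ ∧ G.Adj t₂ t₃)
    {t₀ : V} (ht₀ : t₀ ∈ T) (z : V) : z ∈ T ∨ ∃ t ∈ T, G.Adj z t := by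
  by_contra! hz
  set S := {v | v ∉ T ∧ ∀ t ∈ T, ¬G.Adj v t}
  obtain ⟨⟨⟨v, u⟩, hvu⟩, -, ⟨hvT, hv⟩, hu⟩ :=
    (hconn.preconnected z t₀).some.exists_boundary_dart S hz fun h => h.1 ht₀
  simp only [S, Set.mem_ofPred_eq, not_and, not_forall, not_not] at hu
  by_cases huT : u ∈ T
  · exact hv u huT hvu
  obtain ⟨t, ht, hut⟩ := hu huT
  obtain ⟨t₂, ht₂, t₃, ht₃, htt₃, htt₂, ht₂t₃⟩ := hT t ht
  have hnodup : [v, u, t, t₂, t₃].Nodup := by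
    have hne (w) (hw : w ∈ T) : v ≠ w ∧ u ≠ w := ⟨fun h => hvT (h ▸ hw), fun h => huT (h ▸ hw)⟩
    simp [hvu.ne, htt₂.ne, ht₂t₃.ne, htt₃, hne t ht, hne t₂ ht₂, hne t₃ ht₃]
  rcases hpath v u t t₂ t₃ hnodup hvu hut htt₂ ht₂t₃ with h | h | h
  · exact hv t ht h
  · exact hv t₂ ht₂ h
  · exact hv t₃ ht₃ h

theorem FourPathChord.mem_or_adj_of_triangle {V : Type*} {G : SimpleGraph V}
    (hpath : FourPathChord G) (hconn : G.Connected) {x y w : V} (hxy : G.Adj x y)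
    (hyw : G.Adj y w) (hwx : G.Adj w x) (z : V) :
    z = x ∨ z = y ∨ z = w ∨ G.Adj z x ∨ G.Adj z y ∨ G.Adj z w := by
  have hT : ∀ t ∈ ({x, y, w} : Set V), ∃ t₂ ∈ ({x, y, w} : Set V), ∃ t₃ ∈ ({x, y, w} : Set V),
      t ≠ t₃ ∧ G.Adj t t₂ ∧ G.Adj t₂ t₃ := by
    rintro t (rfl | rfl | rfl)
    · exact ⟨y, by simp, w, by simp, hwx.ne.symm, hxy, hyw⟩
    · exact ⟨w, by simp, x, by simp, hxy.ne.symm, hyw, hwx⟩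
    · exact ⟨x, by simp, y, by simp, hyw.ne.symm, hwx, hxy⟩
  rcases hpath.mem_or_exists_adj hconn hT (Set.mem_insert x _) z with h | ⟨t, ht, hzt⟩
  · rcases h with rfl | rfl | rfl <;> simp
  · rcases ht with rfl | rfl | rfl <;> simp [hzt]

theorem Finset.eq_of_sdiff_eq_singleton {α : Type*} [DecidableEq α] {A B : Finset α} {c u : α}
    (h : A \ B = {c}) (hA : u ∈ A) (hB : u ∉ B) : u = c :=
  mem_singleton.1 (h ▸ mem_sdiff.2 ⟨hA, hB⟩)

theorem Finset.mem_of_sdiff_eq_singleton {α : Type*} [DecidableEq α] {A B : Finset α} {c u : α}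
    (h : A \ B = {c}) (hA : u ∈ A) (hu : u ≠ c) : u ∈ B :=
  by_contra fun hB => hu (eq_of_sdiff_eq_singleton h hA hB)

section Facets

variable {Δ : Finset (Finset (Fin n))}

theorem not_adj_of_mem_face (hclique : CliqueComplexProp Δ) {F : Finset (Fin n)} (hF : F ∈ Δ)
    {u v : Fin n} (hu : u ∈ F) (hv : v ∈ F) : ¬(edgeGraph Δ).Adj u v :=
  fun huv => huv.2 ((hclique F).1 hF u hu v hv huv.1)

theorem exists_adj_of_notMem_facet (hclique : CliqueComplexProp Δ) {F : Finset (Fin n)}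
    (hF : IsFacet Δ F) {v : Fin n} (hv : v ∉ F) : ∃ u ∈ F, (edgeGraph Δ).Adj v u := by
  by_contra! h
  have hface : insert v F ∈ Δ := by
    rw [hclique]
    intro i hi j hj hij
    by_contra hij'
    rcases mem_insert.1 hi with rfl | hiF <;> rcases mem_insert.1 hj with rfl | hjF
    · exact hij rfl
    · exact h j hjF ⟨hij, hij'⟩
    · exact h i hiF ⟨hij.symm, by rwa [pair_comm]⟩
    · exact not_adj_of_mem_face hclique hF.1 hiF hjF ⟨hij, hij'⟩
  exact hv (hF.2 _ hface (subset_insert v F) ▸ mem_insert_self v F)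

theorem exists_adj_mem_sdiff (hclique : CliqueComplexProp Δ) {F H : Finset (Fin n)}
    (hF : IsFacet Δ F) (hH : H ∈ Δ) {v : Fin n} (hv : v ∈ H \ F) :
    ∃ u ∈ F \ H, (edgeGraph Δ).Adj v u := by
  obtain ⟨u, hu, hvu⟩ := exists_adj_of_notMem_facet hclique hF (mem_sdiff.1 hv).2
  refine ⟨u, mem_sdiff.2 ⟨hu, fun huH => ?_⟩, hvu⟩
  exact not_adj_of_mem_face hclique hH (mem_sdiff.1 hv).1 huH hvu

theorem exists_two_path_sdiff (hclique : CliqueComplexProp Δ)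
    (hchordal : IsChordal (edgeGraph Δ)ᶜ) {F H : Finset (Fin n)} (hF : IsFacet Δ F)
    (hH : IsFacet Δ H) (h2 : 2 ≤ (F \ H).card)
    {t : Fin n} (ht : t ∈ F \ H) :
    ∃ t₂ ∈ H \ F, ∃ t₃ ∈ F \ H, t ≠ t₃ ∧ (edgeGraph Δ).Adj t t₂ ∧ (edgeGraph Δ).Adj t₂ t₃ := by
  obtain ⟨y, hy, hty⟩ := exists_adj_mem_sdiff hclique hH hF.1 ht
  obtain ⟨t', ht', ht't⟩ := exists_mem_ne h2 t
  obtain ⟨y', hy', ht'y'⟩ := exists_adj_mem_sdiff hclique hH hF.1 ht'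
  rcases adj_or_adj_of_isChordal_compl_s4 hchordal hty ht'y' with h | h | h | h
  · exact absurd h (not_adj_of_mem_face hclique hF.1 (mem_sdiff.1 ht).1 (mem_sdiff.1 ht').1)
  · exact absurd h (not_adj_of_mem_face hclique hH.1 (mem_sdiff.1 hy).1 (mem_sdiff.1 hy').1)
  · exact ⟨y', hy', t', ht', ht't.symm, h, ht'y'.symm⟩
  · exact ⟨y, hy, t', ht', ht't.symm, hty, h.symm⟩

theorem card_sdiff_eq_one_of_isFacet (hclique : CliqueComplexProp Δ) (hpure : IsPure Δ)
    (hconn : (edgeGraph Δ).Connected) (hpath : FourPathChord (edgeGraph Δ))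
    (hchordal : IsChordal (edgeGraph Δ)ᶜ) {F H : Finset (Fin n)} (hF : IsFacet Δ F)
    (hH : IsFacet Δ H) (hne : F ≠ H) (hint : (F ∩ H).Nonempty) :
    (F \ H).card = 1 ∧ (H \ F).card = 1 := by
  have hcard : (F \ H).card = (H \ F).card := card_sdiff_comm (hpure F H hF hH)
  obtain ⟨t₀, ht₀⟩ : (F \ H).Nonempty := sdiff_nonempty.2 fun h => hne (hF.2 H hH.1 h)
  suffices (F \ H).card = 1 from ⟨this, hcard ▸ this⟩
  by_contra h1
  have h2 : 2 ≤ (F \ H).card := by have := card_pos.2 ⟨t₀, ht₀⟩; omega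
  let T : Set (Fin n) := ↑(F \ H ∪ H \ F)
  have hT : ∀ t ∈ T, ∃ t₂ ∈ T, ∃ t₃ ∈ T,
      t ≠ t₃ ∧ (edgeGraph Δ).Adj t t₂ ∧ (edgeGraph Δ).Adj t₂ t₃ := by
    simp only [T, coe_union, Set.mem_union, mem_coe]
    rintro t (ht | ht)
    · obtain ⟨t₂, ht₂, t₃, ht₃, h⟩ := exists_two_path_sdiff hclique hchordal hF hH h2 ht
      exact ⟨t₂, Or.inr ht₂, t₃, Or.inl ht₃, h⟩
    · obtain ⟨t₂, ht₂, t₃, ht₃, h⟩ :=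
        exists_two_path_sdiff hclique hchordal hH hF (hcard ▸ h2) ht
      exact ⟨t₂, Or.inl ht₂, t₃, Or.inr ht₃, h⟩
  obtain ⟨z, hz⟩ := hint
  rw [mem_inter] at hz
  rcases hpath.mem_or_exists_adj hconn hT (mem_coe.2 (mem_union_left _ ht₀)) z with
    hzT | ⟨t, ht, hzt⟩
  · simp [T, hz.1, hz.2] at hzT
  · simp only [T, coe_union, Set.mem_union, mem_coe, mem_sdiff] at ht
    rcases ht with ht | ht
    · exact not_adj_of_mem_face hclique hF.1 hz.1 ht.1 hzt
    · exact not_adj_of_mem_face hclique hH.1 hz.2 ht.1 hzt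

theorem exists_sdiff_eq_singleton_of_isFacet (hclique : CliqueComplexProp Δ) (hpure : IsPure Δ)
    (hconn : (edgeGraph Δ).Connected) (hpath : FourPathChord (edgeGraph Δ))
    (hchordal : IsChordal (edgeGraph Δ)ᶜ) {F H : Finset (Fin n)} (hF : IsFacet Δ F)
    (hH : IsFacet Δ H) (hne : F ≠ H) (hint : (F ∩ H).Nonempty) :
    ∃ a b, F \ H = {a} ∧ H \ F = {b} ∧ (edgeGraph Δ).Adj a b := by
  obtain ⟨h₁, h₂⟩ :=
    card_sdiff_eq_one_of_isFacet hclique hpure hconn hpath hchordal hF hH hne hint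
  obtain ⟨a, ha⟩ := card_eq_one.1 h₁
  obtain ⟨b, hb⟩ := card_eq_one.1 h₂
  obtain ⟨u, hu, hbu⟩ := exists_adj_mem_sdiff hclique hF hH.1 (hb ▸ mem_singleton_self b)
  exact ⟨a, b, ha, hb, (mem_singleton.1 (ha ▸ hu) ▸ hbu).symm⟩

theorem sdiff_eq_sdiff_of_isFacet (hclique : CliqueComplexProp Δ) (hpure : IsPure Δ)
    (hconn : (edgeGraph Δ).Connected) (hpath : FourPathChord (edgeGraph Δ))
    (hchordal : IsChordal (edgeGraph Δ)ᶜ) {F G H : Finset (Fin n)} (hF : IsFacet Δ F)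
    (hG : IsFacet Δ G) (hH : IsFacet Δ H) (hF3 : 3 ≤ F.card) (hFG : F ≠ G) (hFH : F ≠ H)
    (hHG : H ≠ G) (hintG : (F ∩ G).Nonempty) (hintH : (F ∩ H).Nonempty) : F \ G = F \ H := by
  have pair := @exists_sdiff_eq_singleton_of_isFacet _ _ hclique hpure hconn hpath hchordal
  obtain ⟨x, y, hFGx, hGFy, hxy⟩ := pair hF hG hFG hintG
  obtain ⟨a, b, hFHa, hHFb, -⟩ := pair hF hH hFH hintH
  obtain ⟨hxF, hxG⟩ := mem_sdiff.1 (hFGx ▸ mem_singleton_self x)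
  obtain ⟨hbH, hbF⟩ := mem_sdiff.1 (hHFb ▸ mem_singleton_self b)
  rw [hFGx, hFHa, singleton_inj]
  by_contra hxa
  have hxH : x ∈ H := mem_of_sdiff_eq_singleton hFHa hxF hxa
  have hF2 : 1 < (F.erase x).card := by rw [card_erase_of_mem hxF]; omega
  obtain ⟨s, hs, hsa⟩ := exists_mem_ne hF2 a
  obtain ⟨hsx, hsF⟩ := mem_erase.1 hs
  obtain ⟨c, -, hHGc, -⟩ := pair hH hG hHG ⟨s, mem_inter.2
    ⟨mem_of_sdiff_eq_singleton hFHa hsF hsa, mem_of_sdiff_eq_singleton hFGx hsF hsx⟩⟩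
  -- `H \ G` is a singleton containing both `x ∈ F` and `b ∉ F`.
  have hbG : b ∉ G := fun hbG =>
    not_adj_of_mem_face hclique hH.1 hxH hbH (eq_of_sdiff_eq_singleton hGFy hbG hbF ▸ hxy)
  exact hbF (eq_of_sdiff_eq_singleton hHGc hbH hbG ▸ eq_of_sdiff_eq_singleton hHGc hxH hxG ▸ hxF)

theorem inter_eq_empty_of_isFacet (hclique : CliqueComplexProp Δ) (hpure : IsPure Δ)
    (hconn : (edgeGraph Δ).Connected) (hpath : FourPathChord (edgeGraph Δ))
    (hchordal : IsChordal (edgeGraph Δ)ᶜ) {F G H : Finset (Fin n)} (hF : IsFacet Δ F)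
    (hG : IsFacet Δ G) (hH : IsFacet Δ H) (hF3 : 3 ≤ F.card) (hFG : F ≠ G)
    (hintG : (F ∩ G).Nonempty) (hHF : H ≠ F) (hHG : H ≠ G) : H ∩ F = ∅ := by
  rw [← not_nonempty_iff_eq_empty, inter_comm]
  intro hintH
  have pair := @exists_sdiff_eq_singleton_of_isFacet _ _ hclique hpure hconn hpath hchordal
  obtain ⟨x, y, hFGx, hGFy, hxy⟩ := pair hF hG hFG hintG
  obtain ⟨a, b, hFHa, hHFb, hab⟩ := pair hF hH hHF.symm hintH
  obtain rfl : x = a := by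
    rw [← singleton_inj, ← hFGx, ← hFHa]
    exact sdiff_eq_sdiff_of_isFacet hclique hpure hconn hpath hchordal hF hG hH hF3 hFG
      hHF.symm hHG hintG hintH
  obtain ⟨hxF, hxG⟩ := mem_sdiff.1 (hFGx ▸ mem_singleton_self x)
  obtain ⟨hyG, hyF⟩ := mem_sdiff.1 (hGFy ▸ mem_singleton_self y)
  obtain ⟨-, hxH⟩ := mem_sdiff.1 (hFHa ▸ mem_singleton_self x)
  obtain ⟨hbH, hbF⟩ := mem_sdiff.1 (hHFb ▸ mem_singleton_self b)
  have hby : b ≠ y := by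
    rintro rfl
    refine hHG (hG.2 H hH.1 fun u hu => ?_).symm
    by_cases huF : u ∈ F
    · exact mem_of_sdiff_eq_singleton hFHa huF (by rintro rfl; exact hxG hu)
    · exact eq_of_sdiff_eq_singleton hGFy hu huF ▸ hbH
  have hyb : (edgeGraph Δ).Adj y b := by
    have hyH : y ∉ H := fun hyH => hby (eq_of_sdiff_eq_singleton hHFb hyH hyF).symm
    obtain ⟨u, hu, hyu⟩ := exists_adj_mem_sdiff hclique hH hG.1 (mem_sdiff.2 ⟨hyG, hyH⟩)
    obtain ⟨huH, huG⟩ := mem_sdiff.1 hu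
    have huF : u ∉ F := fun huF =>
      huG (mem_of_sdiff_eq_singleton hFGx huF (by rintro rfl; exact hxH huH))
    exact eq_of_sdiff_eq_singleton hHFb huH huF ▸ hyu
  obtain ⟨z, hz⟩ := hintG
  rw [mem_inter] at hz
  have hzH : z ∈ H := mem_of_sdiff_eq_singleton hFHa hz.1 (by rintro rfl; exact hxG hz.2)
  rcases hpath.mem_or_adj_of_triangle hconn hxy hyb hab.symm z with
    rfl | rfl | rfl | h | h | h
  · exact hxG hz.2
  · exact hyF hz.1
  · exact hbF hz.1
  · exact not_adj_of_mem_face hclique hF.1 hz.1 hxF h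
  · exact not_adj_of_mem_face hclique hG.1 hz.2 hyG h
  · exact not_adj_of_mem_face hclique hH.1 hzH hbH h

end Facets

theorem stmt4_general (Δ : Finset (Finset (Fin n)))
    (hpure : IsPure Δ) (hclique : CliqueComplexProp Δ)
    (hconn : (edgeGraph Δ).Connected) (hpath : FourPathChord (edgeGraph Δ))
    (hchordal : IsChordal (edgeGraph Δ)ᶜ)
    (hdim : ∃ F, IsFacet Δ F ∧ 3 ≤ F.card) :
    (∀ F G H : Finset (Fin n), IsFacet Δ F → IsFacet Δ G → IsFacet Δ H →
      F ≠ G → (F ∩ G).Nonempty → H ≠ F → H ≠ G → H ∩ (F ∪ G) = ∅) ∧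
    (∀ F G : Finset (Fin n), IsFacet Δ F → IsFacet Δ G → F ≠ G → (F ∩ G).Nonempty →
      (F \ G).card = 1 ∧ (G \ F).card = 1) := by
  obtain ⟨F₀, hF₀, hF₀3⟩ := hdim
  have hcard (F : Finset (Fin n)) (hF : IsFacet Δ F) : 3 ≤ F.card := hpure F₀ F hF₀ hF ▸ hF₀3
  refine ⟨fun F G H hF hG hH hFG hint hHF hHG => ?_,
    fun F G hF hG => card_sdiff_eq_one_of_isFacet hclique hpure hconn hpath hchordal hF hG⟩
  rw [inter_union_distrib_left,
    inter_eq_empty_of_isFacet hclique hpure hconn hpath hchordal hF hG hH (hcard F hF) hFG hint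
      hHF hHG,
    inter_eq_empty_of_isFacet hclique hpure hconn hpath hchordal hG hF hH (hcard G hG) hFG.symm
      (by rwa [inter_comm]) hHG hHF, union_self]

/-- in dimension `≥ 2`, no third facet meets a pair of intersecting
facets; consequently `Δ` is a disjoint union of single facets and pairs `(F,G)`
with `|F \ G| = |G \ F| = 1`. -/
theorem stmt4 (Δ : Finset (Finset (Fin n))) (hΔ : IsComplex Δ)
    (hpure : IsPure Δ) (hcore : FullCore Δ) (hclique : CliqueComplexProp Δ)
    (hconn : (edgeGraph Δ).Connected) (hpath : FourPathChord (edgeGraph Δ))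
    (hchordal : IsChordal (edgeGraph Δ)ᶜ)
    (hdim : ∃ F, IsFacet Δ F ∧ 3 ≤ F.card) :
    (∀ F G H : Finset (Fin n), IsFacet Δ F → IsFacet Δ G → IsFacet Δ H →
      F ≠ G → (F ∩ G).Nonempty → H ≠ F → H ≠ G → H ∩ (F ∪ G) = ∅) ∧
    (∀ F G : Finset (Fin n), IsFacet Δ F → IsFacet Δ G → F ≠ G → (F ∩ G).Nonempty →
      (F \ G).card = 1 ∧ (G \ F).card = 1) :=
  stmt4_general Δ hpure hclique hconn hpath hchordal hdim
end

section
/- Let $\Delta$ be a simplicial complex of dimension $d \geq 2$ on $[n]$ that is a disjoint union of subcomplexes of the following types: (type 1) $\langle F, G \rangle$ where $F, G$ are $d$-simplices with $F \cap G \neq \emptyset$ and $|F \setminus G| = |G \setminus F| = 1$; (type 2) $\langle H \rangle$ a single $d$-simplex; with at least two components. Then $\Delta$ is pure, $\mathrm{core}\,\Delta = \Delta$, all minimal non-faces of $\Delta$ have size 2, the edge graph $G_\Delta$ (the complement of the 1-skeleton) is connected, and every length-4 path in $G_\Delta$ with distinct endpoints has a chord from the first vertex to the third, fourth, or fifth vertex.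 -/
open Finset

variable {n : ℕ}

/-!
Two facets of `Δ` meet exactly when they lie in the same component, and by the last condition
of `DisjointUnionStructure` "meeting" is a transitive relation on facets. Hence a facet `H`
disjoint from a facet `F` (one of the two disjoint facets of the hypothesis misses `F`) yields a
vertex of `H` joined in `G_Δ` to every vertex of `F`; this gives `core Δ = Δ` and connectedness.
A set all of whose pairs are faces cannot spread over both facets of a type-1 component, so `Δ`
is a flag complex and its minimal non-faces are edges. Finally, a 4-path `i₁ … i₅` without
chords from `i₁` would put `i₃` and `i₅` into the single vertex of `F \ G`.
-/

lemma MinNonFace.card_eq_two {Δ : Finset (Finset (Fin n))} {F : Finset (Fin n)}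
    (hΔ : CliqueComplexProp Δ) (hF : MinNonFace Δ F) : F.card = 2 := by
  obtain ⟨hFΔ, hsub⟩ := hF
  refine le_antisymm ?_ ?_
  · by_contra! hlt
    refine hFΔ ((hΔ F).2 fun i hi j hj hij => hsub _ ?_)
    refine Finset.ssubset_iff_subset_ne.2 ⟨insert_subset hi (singleton_subset_iff.2 hj), ?_⟩
    rintro hpair
    rw [← hpair, card_pair hij] at hlt
    omega
  · by_contra! hlt
    exact hFΔ ((hΔ F).2 fun i hi j hj hij => absurd (card_le_one.1 (by omega) i hi j hj) hij)

lemma edgeGraph_not_adj_of_mem {Δ : Finset (Finset (Fin n))} (hΔ : IsComplex Δ)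
    {F : Finset (Fin n)} (hF : F ∈ Δ) {i j : Fin n} (hi : i ∈ F) (hj : j ∈ F) :
    ¬(edgeGraph Δ).Adj i j :=
  fun hadj => hadj.2 (hΔ.1 F hF _ (insert_subset hi (singleton_subset_iff.2 hj)))

namespace DisjointUnionStructure

variable {d : ℕ} {Δ : Finset (Finset (Fin n))} {A B C F F₀ G₀ : Finset (Fin n)}

lemma isPure (h : DisjointUnionStructure Δ d) : IsPure Δ :=
  fun F G hF hG => by rw [h.2.1 F hF, h.2.1 G hG]

lemma facet_nonempty (h : DisjointUnionStructure Δ d) (hF : IsFacet Δ F) : F.Nonempty :=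
  card_pos.1 (by rw [h.2.1 F hF]; exact d.succ_pos)

lemma pair_mem_iff (h : DisjointUnionStructure Δ d) {i j : Fin n} :
    ({i, j} : Finset (Fin n)) ∈ Δ ↔ ∃ F, IsFacet Δ F ∧ i ∈ F ∧ j ∈ F := by
  simp only [h.1, insert_subset_iff, singleton_subset_iff]

lemma eq_or_eq_of_inter_nonempty (h : DisjointUnionStructure Δ d) (hA : IsFacet Δ A)
    (hB : IsFacet Δ B) (hC : IsFacet Δ C) (hAB : A ≠ B) (hmeet : (A ∩ B).Nonempty)
    (hC_meet : (C ∩ (A ∪ B)).Nonempty) : C = A ∨ C = B := by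
  by_contra! hne
  exact hC_meet.ne_empty (h.2.2.2 A B C hA hB hC hAB hmeet hne.1 hne.2)

lemma inter_nonempty_trans (h : DisjointUnionStructure Δ d) (hA : IsFacet Δ A)
    (hB : IsFacet Δ B) (hC : IsFacet Δ C) (hAB : (A ∩ B).Nonempty)
    (hBC : (B ∩ C).Nonempty) : (A ∩ C).Nonempty := by
  by_cases hAB' : A = B
  · exact hAB' ▸ hBC
  have hC_meet : (C ∩ (A ∪ B)).Nonempty := hBC.mono fun x hx => by
    simp only [mem_inter, mem_union] at hx ⊢
    tauto
  rcases h.eq_or_eq_of_inter_nonempty hA hB hC hAB' hAB hC_meet with rfl | rfl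
  · rw [inter_self]
    exact hAB.mono inter_subset_left
  · exact hAB

lemma exists_facet_inter_eq_empty (h : DisjointUnionStructure Δ d) (hF₀ : IsFacet Δ F₀)
    (hG₀ : IsFacet Δ G₀) (h₀ : F₀ ∩ G₀ = ∅) (hF : IsFacet Δ F) :
    ∃ H, IsFacet Δ H ∧ F ∩ H = ∅ := by
  by_contra! hmeet
  have hF₀F : (F₀ ∩ F).Nonempty := by
    rw [inter_comm]
    exact hmeet F₀ hF₀
  exact (h.inter_nonempty_trans hF₀ hF hG₀ hF₀F (hmeet G₀ hG₀)).ne_empty h₀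

lemma exists_adj_forall_mem (h : DisjointUnionStructure Δ d) (hF₀ : IsFacet Δ F₀)
    (hG₀ : IsFacet Δ G₀) (h₀ : F₀ ∩ G₀ = ∅) (hF : IsFacet Δ F) :
    ∃ k, ∀ x ∈ F, (edgeGraph Δ).Adj x k := by
  obtain ⟨H, hH, hFH⟩ := h.exists_facet_inter_eq_empty hF₀ hG₀ h₀ hF
  obtain ⟨k, hk⟩ := h.facet_nonempty hH
  refine ⟨k, fun x hx => ⟨?_, fun hxk => ?_⟩⟩
  · rintro rfl
    exact (nonempty_iff_ne_empty.1 ⟨x, mem_inter.2 ⟨hx, hk⟩⟩) hFH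
  · obtain ⟨A, hA, hxA, hkA⟩ := h.pair_mem_iff.1 hxk
    exact (h.inter_nonempty_trans hF hA hH ⟨x, mem_inter.2 ⟨hx, hxA⟩⟩
      ⟨k, mem_inter.2 ⟨hkA, hk⟩⟩).ne_empty hFH

lemma fullCore (h : DisjointUnionStructure Δ d) (hΔ : IsComplex Δ) (hF₀ : IsFacet Δ F₀)
    (hG₀ : IsFacet Δ G₀) (h₀ : F₀ ∩ G₀ = ∅) : FullCore Δ := by
  intro i
  obtain ⟨F, hF, hiF⟩ := (h.1 _).1 (hΔ.2 i)
  obtain ⟨k, hk⟩ := h.exists_adj_forall_mem hF₀ hG₀ h₀ hF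
  have hik := hk i (hiF (mem_singleton_self i))
  exact ⟨k, hik.1.symm, hik.2⟩

lemma connected (h : DisjointUnionStructure Δ d) (hF₀ : IsFacet Δ F₀)
    (hG₀ : IsFacet Δ G₀) (h₀ : F₀ ∩ G₀ = ∅) : (edgeGraph Δ).Connected := by
  obtain ⟨v, -⟩ := h.facet_nonempty hF₀
  refine (SimpleGraph.connected_iff _).2 ⟨fun i j => ?_, ⟨v⟩⟩
  by_cases hij : ({i, j} : Finset (Fin n)) ∈ Δ
  · obtain ⟨F, hF, hiF, hjF⟩ := h.pair_mem_iff.1 hij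
    obtain ⟨k, hk⟩ := h.exists_adj_forall_mem hF₀ hG₀ h₀ hF
    exact (hk i hiF).reachable.trans (hk j hjF).reachable.symm
  · rcases eq_or_ne i j with rfl | hne
    · rfl
    · exact SimpleGraph.Adj.reachable ⟨hne, hij⟩

lemma cliqueComplexProp (h : DisjointUnionStructure Δ d) (hΔ : IsComplex Δ)
    (hF₀ : IsFacet Δ F₀) : CliqueComplexProp Δ := by
  intro S
  refine ⟨fun hS i hi j hj _ => hΔ.1 S hS _ (insert_subset hi (singleton_subset_iff.2 hj)),
    fun hS => (h.1 S).2 ?_⟩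
  rcases S.eq_empty_or_nonempty with rfl | ⟨a, ha⟩
  · exact ⟨F₀, hF₀, empty_subset _⟩
  obtain ⟨A, hA, haA⟩ := (h.1 _).1 (hΔ.2 a)
  rw [singleton_subset_iff] at haA
  by_cases hSA : S ⊆ A
  · exact ⟨A, hA, hSA⟩
  obtain ⟨x, hxS, hxA⟩ := not_subset.1 hSA
  obtain ⟨B, hB, haB, hxB⟩ := h.pair_mem_iff.1 (hS a ha x hxS (ne_of_mem_of_not_mem haA hxA))
  refine ⟨B, hB, fun y hyS => ?_⟩
  by_contra hyB
  obtain ⟨C, hC, hxC, hyC⟩ :=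
    h.pair_mem_iff.1 (hS x hxS y hyS (ne_of_mem_of_not_mem hxB hyB))
  have hAB : A ≠ B := fun hAB => hxA (hAB ▸ hxB)
  rcases h.eq_or_eq_of_inter_nonempty hA hB hC hAB ⟨a, mem_inter.2 ⟨haA, haB⟩⟩
    ⟨x, mem_inter.2 ⟨hxC, mem_union_right _ hxB⟩⟩ with rfl | rfl
  · exact hxA hxC
  · exact hyB hyC

lemma fourPathChord (h : DisjointUnionStructure Δ d) (hΔ : IsComplex Δ) :
    FourPathChord (edgeGraph Δ) := by
  intro i₁ i₂ i₃ i₄ i₅ hnd _ _ h34 h45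
  by_contra! hchord
  simp only [List.nodup_cons, List.mem_cons, List.not_mem_nil, or_false,
    List.nodup_nil] at hnd
  have hfacet : ∀ x, i₁ ≠ x → ¬(edgeGraph Δ).Adj i₁ x → ∃ F, IsFacet Δ F ∧ i₁ ∈ F ∧ x ∈ F :=
    fun x hx hadj => h.pair_mem_iff.1 (not_not.1 fun hm => hadj ⟨hx, hm⟩)
  obtain ⟨A, hA, h1A, h3A⟩ := hfacet i₃ (by tauto) hchord.1
  obtain ⟨B, hB, h1B, h4B⟩ := hfacet i₄ (by tauto) hchord.2.1
  obtain ⟨C, hC, h1C, h5C⟩ := hfacet i₅ (by tauto) hchord.2.2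
  have hAB : A ≠ B := fun hAB => edgeGraph_not_adj_of_mem hΔ hB.1 (hAB ▸ h3A) h4B h34
  have hmeet : (A ∩ B).Nonempty := ⟨i₁, mem_inter.2 ⟨h1A, h1B⟩⟩
  rcases h.eq_or_eq_of_inter_nonempty hA hB hC hAB hmeet
    ⟨i₁, mem_inter.2 ⟨h1C, mem_union_left _ h1A⟩⟩ with rfl | rfl
  · obtain ⟨x, hx⟩ := card_eq_one.1 (h.2.2.1 C B hA hB hAB hmeet).1
    have hsdiff : ∀ y ∈ C, (edgeGraph Δ).Adj i₄ y → y = x := fun y hy hy4 =>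
      mem_singleton.1 <| hx ▸
        mem_sdiff.2 ⟨hy, fun hyB => edgeGraph_not_adj_of_mem hΔ hB.1 h4B hyB hy4⟩
    exact hnd.2.2.1 (Or.inr ((hsdiff i₃ h3A h34.symm).trans (hsdiff i₅ h5C h45).symm))
  · exact edgeGraph_not_adj_of_mem hΔ hC.1 h4B h5C h45

end DisjointUnionStructure

theorem stmt5_general (d : ℕ) (Δ : Finset (Finset (Fin n))) (hΔ : IsComplex Δ)
    (hstr : DisjointUnionStructure Δ d)
    (htwo : ∃ F G, IsFacet Δ F ∧ IsFacet Δ G ∧ F ≠ G ∧ F ∩ G = ∅) :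
    IsPure Δ ∧ FullCore Δ ∧ (∀ F, MinNonFace Δ F → F.card = 2) ∧
      (edgeGraph Δ).Connected ∧ FourPathChord (edgeGraph Δ) := by
  obtain ⟨F₀, G₀, hF₀, hG₀, -, h₀⟩ := htwo
  exact ⟨hstr.isPure, hstr.fullCore hΔ hF₀ hG₀ h₀,
    fun F hF => hF.card_eq_two (hstr.cliqueComplexProp hΔ hF₀),
    hstr.connected hF₀ hG₀ h₀,
    hstr.fourPathChord hΔ⟩

/-- a disjoint union (with at least two components) of `d`-simplices
and type-1 pairs, `d ≥ 2`, satisfies the combinatorial gCI conditions. -/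
theorem stmt5 (d : ℕ) (hd : 2 ≤ d) (Δ : Finset (Finset (Fin n))) (hΔ : IsComplex Δ)
    (hstr : DisjointUnionStructure Δ d)
    (htwo : ∃ F G, IsFacet Δ F ∧ IsFacet Δ G ∧ F ≠ G ∧ F ∩ G = ∅) :
    IsPure Δ ∧ FullCore Δ ∧ (∀ F, MinNonFace Δ F → F.card = 2) ∧
      (edgeGraph Δ).Connected ∧ FourPathChord (edgeGraph Δ) :=
  stmt5_general d Δ hΔ hstr htwo
end

section
/- Let $\Delta$ be a pure 1-dimensional simplicial complex (a graph) on $[n]$ with $\mathrm{core}\,\Delta = \Delta$, such that $\Delta$ is the clique complex of its 1-skeleton, the complement graph $G_\Delta$ is connected, the complement of $G_\Delta$ (i.e., $\Delta_1$) is chordal, and every 4-path in $G_\Delta$ with distinct endpoints has a chord from the first vertex to the 3rd, 4th, or 5th vertex. Then $\Delta$ is a disjoint union of paths. -/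
/-!
Write `G = G_Δ` and `H = Gᶜ = Δ₁`. Since `Δ` is the clique complex of `H` and has no faces with
three vertices, `H` is triangle-free. If a vertex `v` had three `H`-neighbours `a, b, c`, these
would form a triangle in `G`. The four-path condition keeps every vertex of the `G`-component of
a triangle on or adjacent to it: a vertex `u` at distance two, reached through `x` adjacent to
`a`, would start the chordless path `u x a b c`. As `G` is connected, `v` would then be
`G`-adjacent to one of `a, b, c`, which is impossible. So `H` has maximum degree two, and in such a
graph a cycle has no chord; chordality then leaves only cycles of length three, i.e. triangles.
-/

open Finset

variable {n : ℕ}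

open SimpleGraph

lemma compl_edgeGraph_adj {Δ : Finset (Finset (Fin n))} {i j : Fin n} :
    (edgeGraph Δ)ᶜ.Adj i j ↔ i ≠ j ∧ ({i, j} : Finset (Fin n)) ∈ Δ := by
  simp +contextual [edgeGraph]

lemma exists_isFacet_superset {Δ : Finset (Finset (Fin n))} {s : Finset (Fin n)} (hs : s ∈ Δ) :
    ∃ F, IsFacet Δ F ∧ s ⊆ F := by
  obtain ⟨F, hF, hmax⟩ :=
    (Δ.filter (s ⊆ ·)).exists_max_image card ⟨s, mem_filter.mpr ⟨hs, subset_refl s⟩⟩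
  rw [mem_filter] at hF
  refine ⟨F, ⟨hF.1, fun G hG hFG => eq_of_subset_of_card_le hFG ?_⟩, hF.2⟩
  exact hmax G (mem_filter.mpr ⟨hG, hF.2.trans hFG⟩)

lemma mem_of_isClique_compl_edgeGraph {Δ : Finset (Finset (Fin n))}
    (hclique : CliqueComplexProp Δ) {s : Finset (Fin n)}
    (hs : (edgeGraph Δ)ᶜ.IsClique (s : Set (Fin n))) : s ∈ Δ :=
  (hclique s).mpr fun _ hi _ hj hij => (compl_edgeGraph_adj.mp (hs hi hj hij)).2

lemma cliqueFree_three_compl_edgeGraph {Δ : Finset (Finset (Fin n))}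
    (hdim : ∀ F, IsFacet Δ F → F.card = 2) (hclique : CliqueComplexProp Δ) :
    (edgeGraph Δ)ᶜ.CliqueFree 3 := by
  intro s hs
  obtain ⟨F, hF, hsF⟩ := exists_isFacet_superset (mem_of_isClique_compl_edgeGraph hclique hs.1)
  have := card_le_card hsF
  rw [hs.card_eq, hdim F hF] at this
  omega

namespace SimpleGraph

variable {V : Type*}

def DegreeLeTwo (H : SimpleGraph V) : Prop :=
  ∀ v a b c, H.Adj v a → H.Adj v b → H.Adj v c → a = b ∨ a = c ∨ b = c

lemma Reachable.mem_of_adj_mem {G : SimpleGraph V} {S : Set V}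
    (hS : ∀ ⦃u x⦄, G.Adj u x → x ∈ S → u ∈ S) {u v : V} (h : G.Reachable u v) (hv : v ∈ S) :
    u ∈ S := by
  obtain ⟨w⟩ := h
  induction w with
  | nil => exact hv
  | cons hux _ ih => exact hS hux (ih hv)

lemma adj_of_compl_adj_of_cliqueFree {G : SimpleGraph V} (htri : Gᶜ.CliqueFree 3) {v a b : V}
    (hva : Gᶜ.Adj v a) (hvb : Gᶜ.Adj v b) (hab : a ≠ b) : G.Adj a b := by
  classical
  by_contra h
  exact htri {v, a, b} (is3Clique_triple_iff.mpr ⟨hva, hvb, (compl_adj G a b).mpr ⟨hab, h⟩⟩)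

lemma Walk.IsCycle.mem_edges_of_adj {H : SimpleGraph V} (hdeg : H.DegreeLeTwo) {u a b : V}
    {w : H.Walk u u} (hw : w.IsCycle) (ha : a ∈ w.support) (hab : H.Adj a b) :
    s(a, b) ∈ w.edges := by
  obtain ⟨x, y, hxy, hN⟩ := Set.ncard_eq_two.mp (hw.ncard_neighborSet_toSubgraph_eq_two ha)
  have hx : w.toSubgraph.Adj a x := by simp [← Subgraph.mem_neighborSet, hN]
  have hy : w.toSubgraph.Adj a y := by simp [← Subgraph.mem_neighborSet, hN]
  by_contra hb
  have hbx : x ≠ b := by rintro rfl; exact hb (Walk.adj_toSubgraph_iff_mem_edges.mp hx)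
  have hby : y ≠ b := by rintro rfl; exact hb (Walk.adj_toSubgraph_iff_mem_edges.mp hy)
  rcases hdeg a x y b hx.adj_sub hy.adj_sub hab with h | h | h
  exacts [hxy h, hbx h, hby h]

lemma isAcyclic_of_isChordal {H : SimpleGraph V} (hdeg : H.DegreeLeTwo) (htri : H.CliqueFree 3)
    (hchordal : IsChordal H) : H.IsAcyclic := by
  intro v w hw
  rcases lt_or_ge 3 w.length with hlt | hle
  · obtain ⟨a, b, ha, -, hab, hchord⟩ := hchordal v w hw hlt
    exact hchord (hw.mem_edges_of_adj hdeg ha hab)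
  · obtain ⟨s, hs⟩ := is3Clique_iff_exists_cycle_length_three.mpr
      ⟨v, w, hw, le_antisymm hle hw.three_le_length⟩
    exact htri s hs

end SimpleGraph

namespace FourPathChord

variable {V : Type*} {G : SimpleGraph V} {a b c : V}

lemma near_triangle_of_adj (hpath : FourPathChord G) (hab : G.Adj a b) (hbc : G.Adj b c)
    (hac : G.Adj a c) {u x : V} (hux : G.Adj u x) (hxa : G.Adj x a) :
    u = a ∨ u = b ∨ u = c ∨ G.Adj u a ∨ G.Adj u b ∨ G.Adj u c := by
  by_cases hu : u = a ∨ u = b ∨ u = c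
  · tauto
  rcases eq_or_ne x b with rfl | hxb
  · tauto
  rcases eq_or_ne x c with rfl | hxc
  · tauto
  push Not at hu
  have hnd : [u, x, a, b, c].Nodup := by
    simp [hu, hxb, hxc, hux.ne, hxa.ne, hab.ne, hbc.ne, hac.ne]
  exact Or.inr (Or.inr (Or.inr (hpath u x a b c hnd hux hxa hab hbc)))

lemma near_triangle_of_reachable (hpath : FourPathChord G) (hab : G.Adj a b)
    (hbc : G.Adj b c) (hac : G.Adj a c) {u : V} (hu : G.Reachable u a) :
    u = a ∨ u = b ∨ u = c ∨ G.Adj u a ∨ G.Adj u b ∨ G.Adj u c := by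
  refine hu.mem_of_adj_mem
    (S := {u | u = a ∨ u = b ∨ u = c ∨ G.Adj u a ∨ G.Adj u b ∨ G.Adj u c})
    (fun u x hux hx => ?_) (Or.inl rfl)
  rcases hx with rfl | rfl | rfl | hxa | hxb | hxc
  · exact Or.inr (Or.inr (Or.inr (Or.inl hux)))
  · exact Or.inr (Or.inr (Or.inr (Or.inr (Or.inl hux))))
  · exact Or.inr (Or.inr (Or.inr (Or.inr (Or.inr hux))))
  · exact hpath.near_triangle_of_adj hab hbc hac hux hxa
  · have := hpath.near_triangle_of_adj hab.symm hac hbc hux hxb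
    simp only [Set.mem_ofPred_eq]; tauto
  · have := hpath.near_triangle_of_adj hac.symm hab hbc.symm hux hxc
    simp only [Set.mem_ofPred_eq]; tauto

lemma degreeLeTwo_compl (hpath : FourPathChord G) (hconn : G.Connected)
    (htri : Gᶜ.CliqueFree 3) : Gᶜ.DegreeLeTwo := by
  intro v a b c hva hvb hvc
  by_contra! hne
  obtain ⟨hab, hac, hbc⟩ := hne
  have hGab := adj_of_compl_adj_of_cliqueFree htri hva hvb hab
  have hGbc := adj_of_compl_adj_of_cliqueFree htri hvb hvc hbc
  have hGac := adj_of_compl_adj_of_cliqueFree htri hva hvc hac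
  rw [compl_adj] at hva hvb hvc
  rcases hpath.near_triangle_of_reachable hGab hGbc hGac (hconn.preconnected v a)
    with h | h | h | h | h | h
  exacts [hva.1 h, hvb.1 h, hvc.1 h, hva.2 h, hvb.2 h, hvc.2 h]

end FourPathChord

theorem stmt7_general (Δ : Finset (Finset (Fin n)))
    (hdim : ∀ F, IsFacet Δ F → F.card = 2)
    (hclique : CliqueComplexProp Δ)
    (hconn : (edgeGraph Δ).Connected) (hchordal : IsChordal (edgeGraph Δ)ᶜ)
    (hpath : FourPathChord (edgeGraph Δ)) :
    (∀ v a b c : Fin n, (edgeGraph Δ)ᶜ.Adj v a → (edgeGraph Δ)ᶜ.Adj v b →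
      (edgeGraph Δ)ᶜ.Adj v c → (a = b ∨ a = c ∨ b = c)) ∧
    (edgeGraph Δ)ᶜ.IsAcyclic := by
  have htri := cliqueFree_three_compl_edgeGraph hdim hclique
  have hdeg := hpath.degreeLeTwo_compl hconn htri
  exact ⟨hdeg, isAcyclic_of_isChordal hdeg htri hchordal⟩

/-- the 1-dimensional case — the complex is a disjoint union of paths,
i.e. its 1-skeleton has maximum degree at most 2 and is acyclic. -/
theorem stmt7 (Δ : Finset (Finset (Fin n))) (hΔ : IsComplex Δ) (hpure : IsPure Δ)
    (hdim : ∀ F, IsFacet Δ F → F.card = 2) (hne : ∃ F, IsFacet Δ F)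
    (hcore : FullCore Δ) (hclique : CliqueComplexProp Δ)
    (hconn : (edgeGraph Δ).Connected) (hchordal : IsChordal (edgeGraph Δ)ᶜ)
    (hpath : FourPathChord (edgeGraph Δ)) :
    (∀ v a b c : Fin n, (edgeGraph Δ)ᶜ.Adj v a → (edgeGraph Δ)ᶜ.Adj v b →
      (edgeGraph Δ)ᶜ.Adj v c → (a = b ∨ a = c ∨ b = c)) ∧
    (edgeGraph Δ)ᶜ.IsAcyclic :=
  stmt7_general Δ hdim hclique hconn hchordal hpath
end

section
/- Let $\Delta$ be a pure simplicial complex on $[n]$ with $\mathrm{core}\,\Delta = \Delta$ whose Stanley–Reisner ideal $I_\Delta$ is matroidal of degree 2 and such that $K[\Delta]$ is Buchsbaum (equivalently, the gCI combinatorial conditions hold). Then $\Delta$ is a disjoint union of $d$-simplices where $d = \dim \Delta$: no two distinct facets of $\Delta$ intersect. -/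
open Finset

variable {n : ℕ}

/-!
If facets `F ≠ G` share a vertex `v`, the gCI condition gives an edge `i₁ i₂` of `G_Δ` with
`i₁ ∈ F \ G`, `i₂ ∈ G \ F`, and `core Δ = Δ` gives an edge `w v`. Since `F` and `G` are faces,
`v` has no neighbour in `F ∪ G`; in particular `w ∉ {i₁, i₂}`, and the exchange property applied
to the edges `w v` and `i₁ i₂` produces a neighbour of `v` among `i₁, i₂`, a contradiction.
-/

theorem IsComplex.pair_mem {Δ : Finset (Finset (Fin n))} (hΔ : IsComplex Δ)
    {F : Finset (Fin n)} (hF : F ∈ Δ) {i j : Fin n} (hi : i ∈ F) (hj : j ∈ F) :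
    ({i, j} : Finset (Fin n)) ∈ Δ :=
  hΔ.1 F hF _ (Finset.insert_subset hi (Finset.singleton_subset_iff.mpr hj))

theorem IsComplex.not_edgeGraph_adj {Δ : Finset (Finset (Fin n))} (hΔ : IsComplex Δ)
    {F : Finset (Fin n)} (hF : F ∈ Δ) {i j : Fin n} (hi : i ∈ F) (hj : j ∈ F) :
    ¬ (edgeGraph Δ).Adj i j :=
  fun h => h.2 (hΔ.pair_mem hF hi hj)

theorem FullCore.exists_edgeGraph_adj {Δ : Finset (Finset (Fin n))} (hcore : FullCore Δ)
    (i : Fin n) : ∃ j, (edgeGraph Δ).Adj i j :=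
  let ⟨j, hji, hij⟩ := hcore i
  ⟨j, hji.symm, hij⟩

theorem ExchangeProp.adj_or_adj {V : Type*} [DecidableEq V] {G : SimpleGraph V}
    (hG : ExchangeProp G) {v w p q : V} (hwv : G.Adj w v) (hpq : G.Adj p q)
    (hwp : w ≠ p) (hwq : w ≠ q) : G.Adj v p ∨ G.Adj v q := by
  obtain ⟨k, hk, -, hvk⟩ := hG w v p q hwv hpq (by simp [hwp, hwq])
  rcases Finset.mem_insert.mp hk with rfl | hk
  · exact Or.inl hvk
  · exact Or.inr (Finset.mem_singleton.mp hk ▸ hvk)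

theorem stmt10_general (Δ : Finset (Finset (Fin n))) (hΔ : IsComplex Δ)
    (hcore : FullCore Δ)
    (hmatroid : ExchangeProp (edgeGraph Δ))
    (hgCI : ∀ F G, IsFacet Δ F → IsFacet Δ G → F ≠ G → (F ∩ G).Nonempty →
      ∃ i₁ ∈ F \ G, ∃ i₂ ∈ G \ F, (edgeGraph Δ).Adj i₁ i₂) :
    ∀ F G, IsFacet Δ F → IsFacet Δ G → F ≠ G → F ∩ G = ∅ := by
  intro F G hF hG hne
  by_contra hcap
  have hFG : (F ∩ G).Nonempty := Finset.nonempty_iff_ne_empty.mpr hcap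
  obtain ⟨i₁, hi₁, i₂, hi₂, hi₁₂⟩ := hgCI F G hF hG hne hFG
  have hi₁F := (Finset.mem_sdiff.mp hi₁).1
  have hi₂G := (Finset.mem_sdiff.mp hi₂).1
  obtain ⟨v, hv⟩ := hFG
  obtain ⟨hvF, hvG⟩ := Finset.mem_inter.mp hv
  obtain ⟨w, hvw⟩ := hcore.exists_edgeGraph_adj v
  have hwi₁ : w ≠ i₁ := by
    rintro rfl; exact hΔ.not_edgeGraph_adj hF.1 hvF hi₁F hvw
  have hwi₂ : w ≠ i₂ := by
    rintro rfl; exact hΔ.not_edgeGraph_adj hG.1 hvG hi₂G hvw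
  rcases hmatroid.adj_or_adj hvw.symm hi₁₂ hwi₁ hwi₂ with hvi₁ | hvi₂
  · exact hΔ.not_edgeGraph_adj hF.1 hvF hi₁F hvi₁
  · exact hΔ.not_edgeGraph_adj hG.1 hvG hi₂G hvi₂

/-- a matroidal Buchsbaum (gCI) Stanley–Reisner complex is a
disjoint union of simplices: no two distinct facets intersect. -/
theorem stmt10 (Δ : Finset (Finset (Fin n))) (hΔ : IsComplex Δ) (hpure : IsPure Δ)
    (hcore : FullCore Δ) (hclique : CliqueComplexProp Δ)
    (hmatroid : ExchangeProp (edgeGraph Δ))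
    (hgCI : ∀ F G, IsFacet Δ F → IsFacet Δ G → F ≠ G → (F ∩ G).Nonempty →
      ∃ i₁ ∈ F \ G, ∃ i₂ ∈ G \ F, (edgeGraph Δ).Adj i₁ i₂) :
    ∀ F G, IsFacet Δ F → IsFacet Δ G → F ≠ G → F ∩ G = ∅ :=
  stmt10_general Δ hΔ hcore hmatroid hgCI
end

section
/- Let $G$ be a graph on $[n]$ whose complement is a disjoint union of paths. Then $G$ is connected whenever $n \geq 4$ and the complement has at least 2 components or a component that is a path of length at least 1; moreover, every path of length 4 in $G$ with distinct endpoints $i_1, i_5$ admits a chord $\{i_1, i_q\} \in G$ for some $q \in \{3,4,5\}$. -/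
open Finset

variable {n : ℕ}

section Homology

variable (K : Type*) [Field K]

/-! Every vertex has at most two non-neighbours in `G`, so a vertex `i₁` that misses `i₃`, `i₄`
and `i₅` cannot exist. For connectivity, let `u`, `v` be non-adjacent in `G`, i.e. adjacent in the
forest `Gᶜ`. Since `Gᶜ` has no triangle, every other vertex is a `G`-neighbour of `u` or of `v`;
if none of two further vertices `a`, `b` is a common one, the degree bound forces, say,
`Gᶜ.Adj u a` and `Gᶜ.Adj v b`, and as `Gᶜ` has no `4`-cycle, `u - b - a - v` is a path in `G`. -/

namespace SimpleGraph

variable {V : Type*} {G H : SimpleGraph V} {u v w a b : V}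

theorem IsAcyclic.not_adj_of_adj_of_adj (hH : H.IsAcyclic) (huv : H.Adj u v) (huw : H.Adj u w) :
    ¬H.Adj v w := by
  intro hvw
  have hp : (Walk.cons huv (Walk.cons hvw Walk.nil)).IsPath := by
    simp [huv.ne, hvw.ne, huw.ne]
  exact hvw.ne (hH.eq_snd_of_adj_start hp huw (by simp)).symm

theorem IsAcyclic.not_adj_of_adj_of_adj_of_adj (hH : H.IsAcyclic) (hua : H.Adj u a)
    (hab : H.Adj a b) (hbv : H.Adj b v) (hub : u ≠ b) (hav : a ≠ v) : ¬H.Adj u v := by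
  intro huv
  have hp : (Walk.cons hua (Walk.cons hab (Walk.cons hbv Walk.nil))).IsPath := by
    simp [hua.ne, hab.ne, hbv.ne, huv.ne, hub, hav]
  exact hav (hH.eq_snd_of_adj_start hp huv (by simp)).symm

theorem adj_of_not_compl_adj (huv : u ≠ v) (h : ¬Gᶜ.Adj u v) : G.Adj u v := by
  by_contra hG
  exact h ⟨huv, hG⟩

theorem fourPathChord_of_compl_degree_le_two
    (hdeg : ∀ v a b c : V, Gᶜ.Adj v a → Gᶜ.Adj v b → Gᶜ.Adj v c → (a = b ∨ a = c ∨ b = c)) :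
    FourPathChord G := by
  intro i₁ i₂ i₃ i₄ i₅ hnd _ _ _ _
  simp only [List.nodup_cons, List.mem_cons, List.not_mem_nil, or_false, not_or] at hnd
  obtain ⟨⟨-, h₁₃, h₁₄, h₁₅⟩, -, ⟨h₃₄, h₃₅⟩, h₄₅, -⟩ := hnd
  by_contra! h
  rcases hdeg i₁ i₃ i₄ i₅ ⟨h₁₃, h.1⟩ ⟨h₁₄, h.2.1⟩ ⟨h₁₅, h.2.2⟩ with h | h | h <;> contradiction

theorem reachable_of_compl_adj_of_compl_adj (hacyc : Gᶜ.IsAcyclic) (huv : Gᶜ.Adj u v)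
    (hua : Gᶜ.Adj u a) (hvb : Gᶜ.Adj v b) (hav : a ≠ v) (hbu : b ≠ u) : G.Reachable u v := by
  have hub : ¬Gᶜ.Adj u b := hacyc.not_adj_of_adj_of_adj huv.symm hvb
  have hGav : ¬Gᶜ.Adj a v := hacyc.not_adj_of_adj_of_adj hua huv
  have hba : ¬Gᶜ.Adj b a := hacyc.not_adj_of_adj_of_adj_of_adj hvb.symm huv.symm hua hbu hav.symm
  have hba_ne : b ≠ a := by rintro rfl; exact hub hua
  exact (adj_of_not_compl_adj hbu.symm hub).reachable.trans <|
    (adj_of_not_compl_adj hba_ne hba).reachable.trans (adj_of_not_compl_adj hav hGav).reachable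

theorem reachable_of_compl_adj_of_ne
    (hdeg : ∀ v a b c : V, Gᶜ.Adj v a → Gᶜ.Adj v b → Gᶜ.Adj v c → (a = b ∨ a = c ∨ b = c))
    (hacyc : Gᶜ.IsAcyclic) (huv : Gᶜ.Adj u v) (hab : a ≠ b) (hau : a ≠ u) (hav : a ≠ v)
    (hbu : b ≠ u) (hbv : b ≠ v) : G.Reachable u v := by
  by_cases hGa : G.Adj u a ∧ G.Adj a v
  · exact hGa.1.reachable.trans hGa.2.reachable
  by_cases hGb : G.Adj u b ∧ G.Adj b v
  · exact hGb.1.reachable.trans hGb.2.reachable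
  have ha : Gᶜ.Adj u a ∨ Gᶜ.Adj v a := by
    simp only [compl_adj, G.adj_comm v a]
    tauto
  have hb : Gᶜ.Adj u b ∨ Gᶜ.Adj v b := by
    simp only [compl_adj, G.adj_comm v b]
    tauto
  rcases ha with hua | hva <;> rcases hb with hub | hvb
  · rcases hdeg u v a b huv hua hub with h | h | h <;> tauto
  · exact reachable_of_compl_adj_of_compl_adj hacyc huv hua hvb hav hbu
  · exact reachable_of_compl_adj_of_compl_adj hacyc huv hub hva hbv hau
  · rcases hdeg v u a b huv.symm hva hvb with h | h | h <;> tauto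

theorem connected_of_compl_degree_le_two_of_isAcyclic [Fintype V] (hcard : 4 ≤ Fintype.card V)
    (hdeg : ∀ v a b c : V, Gᶜ.Adj v a → Gᶜ.Adj v b → Gᶜ.Adj v c → (a = b ∨ a = c ∨ b = c))
    (hacyc : Gᶜ.IsAcyclic) : G.Connected := by
  classical
  have : Nonempty V := Fintype.card_pos_iff.mp (by omega)
  refine ⟨fun u v => ?_⟩
  rcases eq_or_ne u v with rfl | huv
  · rfl
  by_cases hG : G.Adj u v
  · exact hG.reachable
  have hrest : 1 < ({u, v}ᶜ : Finset V).card := by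
    have := Finset.card_le_two (a := u) (b := v)
    rw [Finset.card_compl]
    omega
  obtain ⟨a, ha, b, hb, hab⟩ := Finset.one_lt_card.mp hrest
  simp only [Finset.mem_compl, Finset.mem_insert, Finset.mem_singleton, not_or] at ha hb
  exact reachable_of_compl_adj_of_ne hdeg hacyc ⟨huv, hG⟩ hab ha.1 ha.2 hb.1 hb.2

end SimpleGraph

/-- if the complement of `G` is a disjoint union of paths (max
degree `≤ 2` and acyclic), then `G` is connected whenever `n ≥ 4` and the
complement is disconnected or has an edge; moreover `G` satisfies the 4-path
chord condition. -/
theorem stmt16 (G : SimpleGraph (Fin n))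
    (hdeg : ∀ v a b c : Fin n, Gᶜ.Adj v a → Gᶜ.Adj v b → Gᶜ.Adj v c →
      (a = b ∨ a = c ∨ b = c))
    (hacyc : Gᶜ.IsAcyclic) :
    (4 ≤ n →
      ((∃ u v : Fin n, ¬ Gᶜ.Reachable u v) ∨ ∃ u v : Fin n, Gᶜ.Adj u v) →
      G.Connected) ∧
    FourPathChord G :=
  ⟨fun hn _ =>
    SimpleGraph.connected_of_compl_degree_le_two_of_isAcyclic (by simpa using hn) hdeg hacyc,
    SimpleGraph.fourPathChord_of_compl_degree_le_two hdeg⟩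
end Homology
end

section
/- Let $\Delta$ be a pure simplicial complex on $[n]$ with $\mathrm{core}\,\Delta = \Delta$, which is the clique complex of its 1-skeleton, such that the edge graph $G_\Delta$ (complement of the 1-skeleton) is connected and satisfies the 4-path chord condition, and the 1-skeleton is chordal. If $F$ and $H$ are distinct intersecting facets witnessed by the unique cross-edge $\{i_1, i_2\} \in G_\Delta$ ($i_1 \in F \setminus H$, $i_2 \in H \setminus F$), then the set $W = (F \cup H) \setminus \{i_1, i_2\}$ is a face of $\Delta$. -/
open Finset

variable {n : ℕ}

theorem mem_of_subset_union_of_cross_pairs_mem {Δ : Finset (Finset (Fin n))}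
    (hclique : CliqueComplexProp Δ) {F H W : Finset (Fin n)} (hF : F ∈ Δ) (hH : H ∈ Δ)
    (hW : W ⊆ F ∪ H)
    (hcross : ∀ a ∈ W, ∀ b ∈ W, a ∈ F \ H → b ∈ H \ F → ({a, b} : Finset (Fin n)) ∈ Δ) :
    W ∈ Δ := by
  refine (hclique W).2 fun a ha b hb hab => ?_
  by_cases haF : a ∈ F <;> by_cases hbF : b ∈ F
  · exact (hclique F).1 hF a haF b hbF hab
  · have hbH : b ∈ H := (mem_union.1 (hW hb)).resolve_left hbF
    by_cases haH : a ∈ H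
    · exact (hclique H).1 hH a haH b hbH hab
    · exact hcross a ha b hb (mem_sdiff.2 ⟨haF, haH⟩) (mem_sdiff.2 ⟨hbH, hbF⟩)
  · have haH : a ∈ H := (mem_union.1 (hW ha)).resolve_left haF
    by_cases hbH : b ∈ H
    · exact (hclique H).1 hH a haH b hbH hab
    · rw [pair_comm]
      exact hcross b hb a ha (mem_sdiff.2 ⟨hbF, hbH⟩) (mem_sdiff.2 ⟨haH, haF⟩)
  · have haH : a ∈ H := (mem_union.1 (hW ha)).resolve_left haF
    have hbH : b ∈ H := (mem_union.1 (hW hb)).resolve_left hbF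
    exact (hclique H).1 hH a haH b hbH hab

theorem stmt17_general (Δ : Finset (Finset (Fin n)))
    (hclique : CliqueComplexProp Δ)
    (F H : Finset (Fin n)) (hF : IsFacet Δ F) (hH : IsFacet Δ H)
    (i₁ i₂ : Fin n)
    (huniq : ∀ j₁ ∈ F \ H, ∀ j₂ ∈ H \ F,
      (edgeGraph Δ).Adj j₁ j₂ → j₁ = i₁ ∧ j₂ = i₂) :
    (F ∪ H) \ {i₁, i₂} ∈ Δ := by
  refine mem_of_subset_union_of_cross_pairs_mem hclique hF.1 hH.1 sdiff_subset ?_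
  intro a ha b _ haFH hbHF
  by_contra hab
  have hne : a ≠ b := fun h => (mem_sdiff.1 hbHF).2 (h ▸ (mem_sdiff.1 haFH).1)
  have ha₁ : a = i₁ := (huniq a haFH b hbHF ⟨hne, hab⟩).1
  exact (mem_sdiff.1 ha).2 (ha₁ ▸ mem_insert_self a {i₂})

/-- given intersecting distinct facets `F, H` with unique cross
edge `{i₁, i₂}` of `G_Δ`, the set `W = (F ∪ H) \ {i₁, i₂}` is a face of `Δ`. -/
theorem stmt17 (Δ : Finset (Finset (Fin n))) (hΔ : IsComplex Δ)
    (hpure : IsPure Δ) (hcore : FullCore Δ) (hclique : CliqueComplexProp Δ)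
    (hconn : (edgeGraph Δ).Connected) (hpath : FourPathChord (edgeGraph Δ))
    (hchordal : IsChordal (edgeGraph Δ)ᶜ)
    (F H : Finset (Fin n)) (hF : IsFacet Δ F) (hH : IsFacet Δ H)
    (hne : F ≠ H) (hint : (F ∩ H).Nonempty)
    (i₁ i₂ : Fin n) (h₁ : i₁ ∈ F \ H) (h₂ : i₂ ∈ H \ F)
    (hadj : (edgeGraph Δ).Adj i₁ i₂)
    (huniq : ∀ j₁ ∈ F \ H, ∀ j₂ ∈ H \ F,
      (edgeGraph Δ).Adj j₁ j₂ → j₁ = i₁ ∧ j₂ = i₂) :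
    (F ∪ H) \ {i₁, i₂} ∈ Δ :=
  stmt17_general Δ hclique F H hF hH i₁ i₂ huniq
end
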